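/- arXiv:math/9706211 — 4 statements merged into one kernel-verified Lean document; each statement's English description precedes it below -/
import Mathlib

section
/- Let H be a complex Hilbert space, let S be a positive invertible bounded operator on H, let T be a bounded operator on H, let c ≥ 1 and 0 < θ < 1. If ‖T‖ ≤ c and ‖S⁻¹ T S‖ ≤ 1, then ‖S^{θ−1} T S^{1−θ}‖ ≤ c^θ. -/
set_option maxHeartbeats 1000000



open scoped NNReal

section Statement10Aux

variable {H : Type*} [NormedAddCommGroup H] [InnerProductSpace ℂ H] [CompleteSpace H]

lemma st10_rpow_eq_real_cfc (V : H →L[ℂ] H) (hpos : 0 ≤ V) (t : ℝ) :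
    V ^ t = cfc (fun x : ℝ => x ^ t) V := by
  rw [CFC.rpow_def, cfc_nnreal_eq_real _ _ hpos]
  refine cfc_congr fun x hx => ?_
  have hx0 : 0 ≤ x := spectrum_nonneg_of_nonneg hpos hx
  simp [NNReal.coe_rpow, Real.coe_toNNReal x hx0]

lemma st10_norm_rpow_le [Nontrivial H] (V : (H →L[ℂ] H)ˣ)
    (hpos : (0 : H →L[ℂ] H) ≤ ↑V) {s : ℝ} (hs0 : 0 ≤ s) (hs1 : s ≤ 1) :
    ‖(↑V : H →L[ℂ] H) ^ s‖ ≤ max ‖(↑V : H →L[ℂ] H)‖ 1 := by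
  rw [st10_rpow_eq_real_cfc _ hpos]
  refine norm_cfc_le (le_trans zero_le_one (le_max_right _ _)) fun x hx => ?_
  have hx0 : 0 ≤ x := spectrum_nonneg_of_nonneg hpos hx
  have hxV : x ≤ ‖(↑V : H →L[ℂ] H)‖ := by
    simpa [abs_of_nonneg hx0] using spectrum.norm_le_norm_of_mem hx
  have h1 : (1:ℝ) ≤ max ‖(↑V : H →L[ℂ] H)‖ 1 := le_max_right _ _
  have h2 : x ^ s ≤ (max ‖(↑V : H →L[ℂ] H)‖ 1) ^ s :=
    Real.rpow_le_rpow hx0 (hxV.trans (le_max_left _ _)) hs0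
  have h3 : (max ‖(↑V : H →L[ℂ] H)‖ 1) ^ s ≤ max ‖(↑V : H →L[ℂ] H)‖ 1 :=
    (Real.rpow_le_rpow_of_exponent_le h1 hs1).trans_eq (Real.rpow_one _)
  rw [Real.norm_eq_abs, abs_of_nonneg (Real.rpow_nonneg hx0 s)]
  exact h2.trans h3

lemma st10_key [Nontrivial H] (S : (H →L[ℂ] H)ˣ)
    (hpos : (0 : H →L[ℂ] H) ≤ ↑S) (T : H →L[ℂ] H) (s d : ℝ) :
    ‖(↑S : H →L[ℂ] H) ^ (-s) * T * (↑S : H →L[ℂ] H) ^ s‖ ^ 2 ≤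
      ‖(↑S : H →L[ℂ] H) ^ (-(s-d)) * T * (↑S : H →L[ℂ] H) ^ (s-d)‖ *
      ‖(↑S : H →L[ℂ] H) ^ (-(s+d)) * T * (↑S : H →L[ℂ] H) ^ (s+d)‖ := by
  set Sa : H →L[ℂ] H := ↑S with hSa
  have h0 : (0:ℝ≥0) ∉ spectrum ℝ≥0 Sa := spectrum.zero_notMem ℝ≥0 S.isUnit
  have hmul : ∀ p q : ℝ, Sa ^ p * Sa ^ q = Sa ^ (p + q) := fun p q =>
    (CFC.rpow_add S.isUnit).symm
  have hsa : ∀ t : ℝ, IsSelfAdjoint (Sa ^ t) := fun t =>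
    IsSelfAdjoint.of_nonneg CFC.rpow_nonneg
  set X : H →L[ℂ] H := Sa ^ (-s) * T * Sa ^ s with hX
  set B : H →L[ℂ] H := star X * X with hB
  have hXB : ‖X‖ ^ 2 = ‖B‖ := by
    rw [hB, CStarRing.norm_star_mul_self, sq]
  have hBsa : IsSelfAdjoint B := IsSelfAdjoint.star_mul_self X
  set u : (H →L[ℂ] H)ˣ :=
    { val := Sa ^ d
      inv := Sa ^ (-d)
      val_inv := by rw [hmul]; simp [CFC.rpow_zero Sa hpos]
      inv_val := by rw [hmul]; simp [CFC.rpow_zero Sa hpos] } with hu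
  have hstarX : star X = Sa ^ s * star T * Sa ^ (-s) := by
    rw [hX]
    simp only [star_mul, (hsa _).star_eq, mul_assoc]
  have hconj : (↑u : H →L[ℂ] H) * B * ↑u⁻¹ =
      star (Sa ^ (-(s+d)) * T * Sa ^ (s+d)) * (Sa ^ (-(s-d)) * T * Sa ^ (s-d)) := by
    have hstarY : star (Sa ^ (-(s+d)) * T * Sa ^ (s+d)) =
        Sa ^ (s+d) * star T * Sa ^ (-(s+d)) := by
      simp only [star_mul, (hsa _).star_eq, mul_assoc]
    rw [hstarY, hB, hstarX, hX]
    show Sa ^ d * (Sa ^ s * star T * Sa ^ (-s) * (Sa ^ (-s) * T * Sa ^ s)) * Sa ^ (-d) = _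
    simp only [← mul_assoc]
    rw [hmul d s, mul_assoc (Sa ^ (d+s) * star T) (Sa ^ (-s)) (Sa ^ (-s)), hmul,
      mul_assoc _ (Sa ^ s) (Sa ^ (-d)), hmul,
      mul_assoc (Sa ^ (s+d) * star T) (Sa ^ (-(s+d))) (Sa ^ (-(s-d))), hmul]
    have e1 : d + s = s + d := by ring
    have e2 : -s + -s = -(s+d) + -(s-d) := by ring
    have e3 : s + -d = s - d := by ring
    rw [e1, e2, e3]
  have hrad : (‖B‖₊ : ENNReal) ≤ ‖(↑u : H →L[ℂ] H) * B * ↑u⁻¹‖₊ := by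
    rw [← hBsa.spectralRadius_eq_nnnorm]
    have : spectralRadius ℂ B = spectralRadius ℂ ((↑u : H →L[ℂ] H) * B * ↑u⁻¹) := by
      unfold spectralRadius
      rw [spectrum.units_conjugate]
    rw [this]
    exact spectrum.spectralRadius_le_nnnorm _
  have hnorm : ‖B‖ ≤ ‖(↑u : H →L[ℂ] H) * B * ↑u⁻¹‖ := by exact_mod_cast hrad
  rw [hconj] at hnorm
  calc ‖X‖ ^ 2 = ‖B‖ := hXB
    _ ≤ ‖star (Sa ^ (-(s+d)) * T * Sa ^ (s+d)) * (Sa ^ (-(s-d)) * T * Sa ^ (s-d))‖ := hnorm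
    _ ≤ ‖star (Sa ^ (-(s+d)) * T * Sa ^ (s+d))‖ * ‖Sa ^ (-(s-d)) * T * Sa ^ (s-d)‖ :=
        norm_mul_le _ _
    _ = ‖Sa ^ (-(s-d)) * T * Sa ^ (s-d)‖ * ‖Sa ^ (-(s+d)) * T * Sa ^ (s+d)‖ := by
        rw [norm_star]; ring

lemma st10_main [Nontrivial H] (S : (H →L[ℂ] H)ˣ)
    (hpos : (0 : H →L[ℂ] H) ≤ ↑S) (T : H →L[ℂ] H) (c : ℝ) (hc : 1 ≤ c)
    (hT : ‖T‖ ≤ c)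
    (hST : ‖(↑S⁻¹ : H →L[ℂ] H) * T * (↑S : H →L[ℂ] H)‖ ≤ 1) :
    ∀ s : ℝ, 0 ≤ s → s ≤ 1 →
      ‖(↑S : H →L[ℂ] H) ^ (-s) * T * (↑S : H →L[ℂ] H) ^ s‖ ≤ c ^ (1 - s) := by
  set Sa : H →L[ℂ] H := ↑S with hSa
  have hcpos : (0:ℝ) < c := lt_of_lt_of_le one_pos hc
  have h0 : (0:ℝ≥0) ∉ spectrum ℝ≥0 Sa := spectrum.zero_notMem ℝ≥0 S.isUnit
  set f : ℝ → ℝ := fun s => ‖Sa ^ (-s) * T * Sa ^ s‖ with hf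
  have hinv : Sa ^ (-1 : ℝ) = (↑S⁻¹ : H →L[ℂ] H) := CFC.rpow_neg_one_eq_inv S hpos
  have hSinvpos : (0 : H →L[ℂ] H) ≤ (↑S⁻¹ : H →L[ℂ] H) := by
    rw [← hinv]; exact CFC.rpow_nonneg
  have hf0 : f 0 ≤ c := by
    simp only [hf, neg_zero, CFC.rpow_zero Sa hpos, one_mul, mul_one]
    exact hT
  have hf1 : f 1 ≤ 1 := by
    simpa only [hf, hinv, CFC.rpow_one Sa hpos] using hST
  set K : ℝ := max (max ‖(↑S⁻¹ : H →L[ℂ] H)‖ 1 * c * max ‖Sa‖ 1) 1 with hK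
  have hK1 : (1:ℝ) ≤ K := le_max_right _ _
  have hKpos : (0:ℝ) < K := lt_of_lt_of_le one_pos hK1
  have hfK : ∀ s : ℝ, 0 ≤ s → s ≤ 1 → f s ≤ K := by
    intro s hs0 hs1
    have hneg : Sa ^ (-s) = (↑S⁻¹ : H →L[ℂ] H) ^ s := CFC.rpow_neg S s hpos
    have h1 : ‖Sa ^ (-s)‖ ≤ max ‖(↑S⁻¹ : H →L[ℂ] H)‖ 1 := by
      rw [hneg]; exact st10_norm_rpow_le S⁻¹ hSinvpos hs0 hs1
    have h2 : ‖Sa ^ s‖ ≤ max ‖Sa‖ 1 := st10_norm_rpow_le S hpos hs0 hs1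
    calc f s ≤ ‖Sa ^ (-s) * T‖ * ‖Sa ^ s‖ := norm_mul_le _ _
      _ ≤ ‖Sa ^ (-s)‖ * ‖T‖ * ‖Sa ^ s‖ :=
          mul_le_mul_of_nonneg_right (norm_mul_le _ _) (norm_nonneg _)
      _ ≤ max ‖(↑S⁻¹ : H →L[ℂ] H)‖ 1 * c * max ‖Sa‖ 1 := by
          refine mul_le_mul ?_ h2 (norm_nonneg _) (by positivity)
          exact mul_le_mul h1 hT (norm_nonneg _) (le_trans zero_le_one (le_max_right _ _))
      _ ≤ K := le_max_left _ _
  have hone_le : ∀ s : ℝ, s ≤ 1 → (1:ℝ) ≤ c ^ (1 - s) := fun s hs =>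
    Real.one_le_rpow hc (by linarith)
  have hn : ∀ n : ℕ, ∀ s : ℝ, 0 ≤ s → s ≤ 1 →
      f s ≤ K ^ ((2⁻¹:ℝ) ^ n) * c ^ (1 - s) := by
    intro n
    induction n with
    | zero =>
      intro s hs0 hs1
      simp only [pow_zero, Real.rpow_one]
      calc f s ≤ K := hfK s hs0 hs1
        _ ≤ K * c ^ (1 - s) := le_mul_of_one_le_right hKpos.le (hone_le s hs1)
    | succ n ih =>
      intro s hs0 hs1
      set ε : ℝ := (2⁻¹:ℝ) ^ n with hε
      have hεε : (2⁻¹:ℝ) ^ (n+1) = ε / 2 := by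
        rw [pow_succ]; ring
      have hsq : f s ^ 2 ≤ K ^ ε * c ^ (2 - 2*s) →
          f s ≤ K ^ ((2⁻¹:ℝ) ^ (n+1)) * c ^ (1 - s) := by
        intro h
        have hy : (0:ℝ) ≤ K ^ (ε/2) * c ^ (1 - s) := by positivity
        have hy2 : (K ^ (ε/2) * c ^ (1 - s)) ^ 2 = K ^ ε * c ^ (2 - 2*s) := by
          rw [mul_pow, sq, sq, ← Real.rpow_add hKpos, ← Real.rpow_add hcpos,
            show ε/2 + ε/2 = ε by ring, show (1-s) + (1-s) = 2 - 2*s by ring]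
        rw [hεε]
        have := Real.sqrt_le_sqrt (hy2 ▸ h)
        rwa [Real.sqrt_sq (norm_nonneg _), Real.sqrt_sq hy] at this
      rcases le_total s 2⁻¹ with hhalf | hhalf
      · -- use d = s : endpoints 0 and 2s
        have hkey := st10_key S hpos T s s
        have e0 : s - s = 0 := sub_self s
        rw [e0] at hkey
        have hbound : f s ^ 2 ≤ K ^ ε * c ^ (2 - 2*s) := by
          have h2s := ih (s + s) (by linarith) (by linarith)
          calc f s ^ 2 ≤ f 0 * f (s + s) := hkey
            _ ≤ c * (K ^ ε * c ^ (1 - (s + s))) :=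
                mul_le_mul hf0 h2s (norm_nonneg _) hcpos.le
            _ = K ^ ε * c ^ (2 - 2*s) := by
                rw [show c * (K ^ ε * c ^ (1 - (s + s))) =
                    K ^ ε * (c ^ (1:ℝ) * c ^ (1 - (s + s))) by rw [Real.rpow_one]; ring,
                  ← Real.rpow_add hcpos, show (1:ℝ) + (1 - (s + s)) = 2 - 2*s by ring]
        exact hsq hbound
      · -- use d = 1 - s : endpoints 2s-1 and 1
        have hkey := st10_key S hpos T s (1 - s)
        have e1 : s + (1 - s) = 1 := by ring
        rw [e1] at hkey
        have hbound : f s ^ 2 ≤ K ^ ε * c ^ (2 - 2*s) := by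
          have h2s := ih (s - (1 - s)) (by linarith) (by linarith)
          calc f s ^ 2 ≤ f (s - (1 - s)) * f 1 := hkey
            _ ≤ (K ^ ε * c ^ (1 - (s - (1 - s)))) * 1 := by
                apply mul_le_mul h2s hf1 (norm_nonneg _) (by positivity)
            _ = K ^ ε * c ^ (2 - 2*s) := by
                rw [mul_one, show 1 - (s - (1 - s)) = 2 - 2*s by ring]
        exact hsq hbound
  intro s hs0 hs1
  have hlim : Filter.Tendsto (fun n : ℕ => K ^ ((2⁻¹:ℝ) ^ n) * c ^ (1 - s))
      Filter.atTop (nhds (c ^ (1 - s))) := by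
    have h1 : Filter.Tendsto (fun n : ℕ => ((2⁻¹:ℝ)) ^ n) Filter.atTop (nhds 0) :=
      tendsto_pow_atTop_nhds_zero_of_lt_one (by norm_num) (by norm_num)
    have h2 : Filter.Tendsto (fun n : ℕ => K ^ ((2⁻¹:ℝ) ^ n)) Filter.atTop (nhds 1) := by
      have hcont : ContinuousAt (fun x : ℝ => K ^ x) 0 :=
        Real.continuousAt_const_rpow hKpos.ne'
      have := hcont.tendsto.comp h1
      simpa [Real.rpow_zero, Function.comp_def] using this
    have := h2.mul_const (c ^ (1 - s))
    simpa using this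
  exact ge_of_tendsto' hlim fun n => hn n s hs0 hs1

end Statement10Aux

/-- Three-lines-lemma estimate for similarities: if `S` is a positive invertible operator,
`‖T‖ ≤ c` and `‖S⁻¹ T S‖ ≤ 1`, then `‖S^{θ-1} T S^{1-θ}‖ ≤ c^θ` for `0 < θ < 1`.
Here real powers of `S` are taken via the continuous functional calculus. -/
theorem statement10 (H : Type*) [NormedAddCommGroup H] [InnerProductSpace ℂ H]
    [CompleteSpace H] (S : (H →L[ℂ] H)ˣ) (hS : (↑S : H →L[ℂ] H).IsPositive)
    (T : H →L[ℂ] H) (c θ : ℝ) (hc : 1 ≤ c) (hθ0 : 0 < θ) (hθ1 : θ < 1)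
    (hT : ‖T‖ ≤ c)
    (hST : ‖(↑S⁻¹ : H →L[ℂ] H) * T * (↑S : H →L[ℂ] H)‖ ≤ 1) :
    ‖cfc (fun x : ℝ => x ^ (θ - 1)) (↑S : H →L[ℂ] H) * T *
        cfc (fun x : ℝ => x ^ (1 - θ)) (↑S : H →L[ℂ] H)‖ ≤ c ^ θ := by
  obtain (hsub | hnt) := subsingleton_or_nontrivial H
  · have hzero : cfc (fun x : ℝ => x ^ (θ - 1)) (↑S : H →L[ℂ] H) * T *
        cfc (fun x : ℝ => x ^ (1 - θ)) (↑S : H →L[ℂ] H) = 0 := Subsingleton.elim _ _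
    rw [hzero, norm_zero]
    exact Real.rpow_nonneg (by linarith) θ
  · have hpos : (0 : H →L[ℂ] H) ≤ ↑S := (ContinuousLinearMap.nonneg_iff_isPositive _).mpr hS
    have h1 : cfc (fun x : ℝ => x ^ (θ - 1)) (↑S : H →L[ℂ] H)
        = (↑S : H →L[ℂ] H) ^ (-(1 - θ)) := by
      rw [show -(1 - θ) = θ - 1 by ring]
      exact (st10_rpow_eq_real_cfc _ hpos _).symm
    have h2 : cfc (fun x : ℝ => x ^ (1 - θ)) (↑S : H →L[ℂ] H)
        = (↑S : H →L[ℂ] H) ^ (1 - θ) := (st10_rpow_eq_real_cfc _ hpos _).symm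
    rw [h1, h2]
    have := st10_main S hpos T c hc hT hST (1 - θ) (by linarith) (by linarith)
    simpa [show 1 - (1 - θ) = θ by ring] using this
end

section
/- Let A be a unital complex Banach algebra, β a subset of the closed unit ball of A with 1_A ∈ β, and 𝒜 the subalgebra of A generated by β; assume 𝒜 is dense in A. Let d be a positive integer and suppose there is a constant K' such that the closed unit ball of A is contained in K' times the closed absolutely convex hull of β ∪ β² ∪ ⋯ ∪ β^d. Then there is a constant K'' such that for every complex Banach algebra B, every continuous algebra homomorphism u : 𝒜 → B satisfies ‖u‖ ≤ K'' · (sup_{x ∈ β} ‖u(x)‖)^d. -/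
open Pointwise

/-- The set of products of `n` elements of `β`. -/
def prodSet {A : Type*} [Monoid A] (β : Set A) (n : ℕ) : Set A :=
  {x | ∃ l : List A, l.length = n ∧ (∀ y ∈ l, y ∈ β) ∧ l.prod = x}

/-- The absolutely convex hull of `s`: all finite sums `∑ λᵢ sᵢ` with `sᵢ ∈ s`,
`λᵢ ∈ ℂ`, `∑ |λᵢ| ≤ 1`. -/
def absConvexCombos {A : Type*} [AddCommMonoid A] [Module ℂ A] (s : Set A) : Set A :=
  {x | ∃ (n : ℕ) (c : Fin n → ℂ) (v : Fin n → A),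
    (∀ i, v i ∈ s) ∧ (∑ i, ‖c i‖) ≤ 1 ∧ (∑ i, c i • v i) = x}

/-- (Theorem 8.1, (ii)_d ⇒ (iii)_d.) Let `A` be a unital complex Banach algebra, `β` a
subset of its closed unit ball with `1 ∈ β` generating a dense subalgebra `𝒜`, and `d ≥ 1`.
If the closed unit ball of `A` is contained in `K'` times the closed absolutely convex
hull of `β ∪ β² ∪ ⋯ ∪ β^d`, then every continuous algebra homomorphism `u : 𝒜 → B` into a
complex Banach algebra satisfies `‖u‖ ≤ K''·(sup_{x∈β}‖u(x)‖)^d`. -/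
theorem statement16 (A : Type*) [NormedRing A] [NormedAlgebra ℂ A] [CompleteSpace A]
    (β : Set A) (hβ : β ⊆ Metric.closedBall (0 : A) 1) (h1β : (1 : A) ∈ β)
    (hdense : Dense ((Algebra.adjoin ℂ β : Subalgebra ℂ A) : Set A))
    (d : ℕ) (hd : 1 ≤ d) (K' : ℝ)
    (hK' : Metric.closedBall (0 : A) 1 ⊆
      K' • closure (absConvexCombos (⋃ n ∈ Set.Icc 1 d, prodSet β n))) :
    ∃ K'' : ℝ, ∀ (B : Type) [NormedRing B] [NormedAlgebra ℂ B] [CompleteSpace B],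
      ∀ u : (Algebra.adjoin ℂ β) →ₐ[ℂ] B,
        (∃ C : ℝ, ∀ y : Algebra.adjoin ℂ β, ‖u y‖ ≤ C * ‖(y : A)‖) →
        ∀ b : ℝ, (∀ (x : A) (hx : x ∈ β), ‖u ⟨x, Algebra.subset_adjoin hx⟩‖ ≤ b) →
        ∀ y : Algebra.adjoin ℂ β, ‖u y‖ ≤ K'' * b ^ d * ‖(y : A)‖ := by
  classical
  refine ⟨|K'|, ?_⟩
  intro B _ _ _ u hu b hb y
  obtain ⟨C, hC⟩ := hu
  have hb0 : 0 ≤ b := le_trans (norm_nonneg _) (hb 1 h1β)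
  have hRHS0 : 0 ≤ |K'| * b ^ d * ‖(y : A)‖ :=
    mul_nonneg (mul_nonneg (abs_nonneg _) (pow_nonneg hb0 d)) (norm_nonneg _)
  by_cases h1B : (1 : B) = 0
  · have hsub : Subsingleton B := subsingleton_of_zero_eq_one h1B.symm
    have h0 : u y = 0 := Subsingleton.elim _ _
    rw [h0, norm_zero]; exact hRHS0
  -- nontrivial case: 1 ≤ b
  have h1pos : 0 < ‖(1 : B)‖ := norm_pos_iff.mpr h1B
  have h1le : 1 ≤ ‖(1 : B)‖ := by
    have h := norm_mul_le (1 : B) 1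
    rw [mul_one] at h
    nlinarith
  have hb1 : 1 ≤ b := by
    refine le_trans h1le ?_
    have h := hb 1 h1β
    have h1 : (⟨1, Algebra.subset_adjoin h1β⟩ : Algebra.adjoin ℂ β) = 1 := rfl
    rwa [h1, map_one] at h
  -- membership of products
  have hmem : ∀ l : List A, (∀ x ∈ l, x ∈ β) → l.prod ∈ Algebra.adjoin ℂ β :=
    fun l hl => Subalgebra.list_prod_mem _ (fun x hx => Algebra.subset_adjoin (hl x hx))
  -- bound on products
  have hprod : ∀ l : List A, (h : ∀ x ∈ l, x ∈ β) → l ≠ [] →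
      ‖u ⟨l.prod, hmem l h⟩‖ ≤ b ^ l.length := by
    intro l
    induction l with
    | nil => intro _ h; exact absurd rfl h
    | cons x t ih =>
      intro h _
      have hx : x ∈ β := h x List.mem_cons_self
      have ht : ∀ z ∈ t, z ∈ β := fun z hz => h z (List.mem_cons_of_mem x hz)
      rcases eq_or_ne t [] with rfl | htne
      · have he : (⟨(x :: ([] : List A)).prod, hmem _ h⟩ : Algebra.adjoin ℂ β)
            = ⟨x, Algebra.subset_adjoin hx⟩ := by
          apply Subtype.ext; simp
        rw [he]
        simpa using hb x hx
      · have heq : (⟨(x :: t).prod, hmem _ h⟩ : Algebra.adjoin ℂ β)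
            = ⟨x, Algebra.subset_adjoin hx⟩ * ⟨t.prod, hmem t ht⟩ := by
          apply Subtype.ext; simp
        rw [heq, map_mul]
        calc ‖u ⟨x, Algebra.subset_adjoin hx⟩ * u ⟨t.prod, hmem t ht⟩‖
            ≤ ‖u ⟨x, Algebra.subset_adjoin hx⟩‖ * ‖u ⟨t.prod, hmem t ht⟩‖ := norm_mul_le _ _
          _ ≤ b * b ^ t.length :=
              mul_le_mul (hb x hx) (ih ht htne) (norm_nonneg _) hb0
          _ = b ^ (x :: t).length := by rw [List.length_cons, pow_succ]; ring
  -- bound on absolutely convex combinations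
  have hcombo : ∀ w ∈ absConvexCombos (⋃ n ∈ Set.Icc 1 d, prodSet β n),
      ∃ hw : w ∈ Algebra.adjoin ℂ β, ‖u ⟨w, hw⟩‖ ≤ b ^ d := by
    rintro w ⟨n, c, v, hv, hsum, rfl⟩
    have hvb : ∀ i, ∃ h : v i ∈ Algebra.adjoin ℂ β, ‖u ⟨v i, h⟩‖ ≤ b ^ d := by
      intro i
      obtain ⟨m, hm, hvm⟩ := Set.mem_iUnion₂.mp (hv i)
      obtain ⟨l, hlen, hlβ, hlprod⟩ := hvm
      rw [← hlprod]
      have hne : l ≠ [] := by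
        intro hnil; rw [hnil] at hlen; simp at hlen; have h1m := hm.1; omega
      refine ⟨hmem l hlβ, le_trans (hprod l hlβ hne) ?_⟩
      exact pow_le_pow_right₀ hb1 (hlen ▸ hm.2)
    choose hvm hub using hvb
    refine ⟨Subalgebra.sum_mem _ fun i _ => Subalgebra.smul_mem _ (hvm i) _, ?_⟩
    have heq : (⟨∑ i, c i • v i,
        Subalgebra.sum_mem _ fun i _ => Subalgebra.smul_mem _ (hvm i) _⟩ : Algebra.adjoin ℂ β)
        = ∑ i, c i • (⟨v i, hvm i⟩ : Algebra.adjoin ℂ β) := by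
      apply Subtype.ext; simp
    rw [heq, map_sum]
    calc ‖∑ i, u (c i • (⟨v i, hvm i⟩ : Algebra.adjoin ℂ β))‖
        ≤ ∑ i, ‖u (c i • (⟨v i, hvm i⟩ : Algebra.adjoin ℂ β))‖ := norm_sum_le _ _
      _ ≤ ∑ i, ‖c i‖ * b ^ d := by
          apply Finset.sum_le_sum
          intro i _
          rw [map_smul, norm_smul]
          exact mul_le_mul_of_nonneg_left (hub i) (norm_nonneg _)
      _ = (∑ i, ‖c i‖) * b ^ d := (Finset.sum_mul _ _ _).symm
      _ ≤ 1 * b ^ d := mul_le_mul_of_nonneg_right hsum (pow_nonneg hb0 d)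
      _ = b ^ d := one_mul _
  -- main argument
  rcases eq_or_ne (y : A) 0 with hy | hy
  · have hy0 : y = 0 := Subtype.ext hy
    subst hy0
    simpa using hRHS0
  have hy0 : (0 : ℝ) < ‖(y : A)‖ := norm_pos_iff.mpr hy
  have hxball : ‖(y : A)‖⁻¹ • (y : A) ∈ Metric.closedBall (0 : A) 1 := by
    rw [Metric.mem_closedBall, dist_zero_right, norm_smul, norm_inv, norm_norm,
      inv_mul_cancel₀ hy0.ne']
  obtain ⟨z, hz, hzx⟩ := Set.mem_smul_set.mp (hK' hxball)
  have hyz : (y : A) = (‖(y : A)‖ * K') • z := by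
    rw [mul_smul, hzx, smul_smul, mul_inv_cancel₀ hy0.ne', one_smul]
  set C' := max C 1 with hC'
  have hC'pos : (0 : ℝ) < C' := lt_of_lt_of_le one_pos (le_max_right _ _)
  have hC'bound : ∀ x : Algebra.adjoin ℂ β, ‖u x‖ ≤ C' * ‖(x : A)‖ := fun x =>
    le_trans (hC x) (mul_le_mul_of_nonneg_right (le_max_left _ _) (norm_nonneg _))
  refine le_of_forall_pos_le_add ?_
  intro ε hε
  set M := C' * (‖(y : A)‖ * |K'|) with hM
  have hM0 : (0 : ℝ) ≤ M := by positivity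
  set δ := ε / (M + 1) with hδ
  have hδ0 : (0 : ℝ) < δ := div_pos hε (by linarith)
  obtain ⟨w, hw, hwd⟩ := Metric.mem_closure_iff.mp hz δ hδ0
  obtain ⟨hwm, hwb⟩ := hcombo w hw
  set cst : ℂ := ((‖(y : A)‖ * K' : ℝ) : ℂ) with hcst
  have hcoesub : ((y - cst • (⟨w, hwm⟩ : Algebra.adjoin ℂ β) : Algebra.adjoin ℂ β) : A)
      = (‖(y : A)‖ * K') • (z - w) := by
    push_cast
    rw [hcst, Complex.coe_smul, smul_sub, ← hyz]
  have hynorm : ‖((y - cst • (⟨w, hwm⟩ : Algebra.adjoin ℂ β) : Algebra.adjoin ℂ β) : A)‖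
      ≤ (‖(y : A)‖ * |K'|) * δ := by
    rw [hcoesub, norm_smul]
    have h1 : ‖z - w‖ ≤ δ := by
      rw [← dist_eq_norm]; exact le_of_lt hwd
    have h2 : ‖(‖(y : A)‖ * K' : ℝ)‖ = ‖(y : A)‖ * |K'| := by
      rw [Real.norm_eq_abs, abs_mul, abs_norm]
    rw [h2]
    exact mul_le_mul_of_nonneg_left h1 (by positivity)
  have hcstnorm : ‖cst‖ = ‖(y : A)‖ * |K'| := by
    rw [hcst, Complex.norm_real, Real.norm_eq_abs, abs_mul, abs_norm]
  have hMδ : M * δ ≤ ε := by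
    have he : M * δ = M * ε / (M + 1) := by rw [hδ]; ring
    rw [he, div_le_iff₀ (by linarith : (0:ℝ) < M + 1)]
    nlinarith
  have hfin : (‖(y : A)‖ * |K'|) * b ^ d = |K'| * b ^ d * ‖(y : A)‖ := by ring
  calc ‖u y‖ = ‖u (y - cst • (⟨w, hwm⟩ : Algebra.adjoin ℂ β))
        + u (cst • (⟨w, hwm⟩ : Algebra.adjoin ℂ β))‖ := by
        rw [← map_add, sub_add_cancel]
    _ ≤ ‖u (y - cst • (⟨w, hwm⟩ : Algebra.adjoin ℂ β))‖
        + ‖u (cst • (⟨w, hwm⟩ : Algebra.adjoin ℂ β))‖ := norm_add_le _ _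
    _ ≤ C' * ((‖(y : A)‖ * |K'|) * δ) + ‖cst‖ * ‖u ⟨w, hwm⟩‖ := by
        gcongr
        · exact le_trans (hC'bound _) (mul_le_mul_of_nonneg_left hynorm (le_of_lt hC'pos))
        · rw [map_smul, norm_smul]
    _ ≤ M * δ + (‖(y : A)‖ * |K'|) * b ^ d := by
        have h2 : ‖cst‖ * ‖u ⟨w, hwm⟩‖ ≤ (‖(y : A)‖ * |K'|) * b ^ d := by
          rw [hcstnorm]
          exact mul_le_mul_of_nonneg_left hwb (by positivity)
        have h1' : C' * ((‖(y : A)‖ * |K'|) * δ) = M * δ := by rw [hM]; ring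
        linarith
    _ ≤ |K'| * b ^ d * ‖(y : A)‖ + ε := by
        rw [hfin, add_comm]
        linarith [hMδ]
end

section
/- Let H be a complex Hilbert space, S a positive invertible bounded operator on H, U a unitary operator on H, and c ≥ 1. If ‖S U S⁻¹‖ ≤ c and ‖S U⁻¹ S⁻¹‖ ≤ c, then the operator (log S)·U − U·(log S) satisfies ‖(log S) U − U (log S)‖ ≤ log c. -/
open scoped NNReal ENNReal
open Filter CFC

section Aux

variable {A : Type*} [CStarAlgebra A] [PartialOrder A] [StarOrderedRing A]

lemma mySmulNonneg {r : ℝ} (hr : 0 ≤ r) {x : A} (hx : 0 ≤ x) : 0 ≤ r • x := by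
  have h := star_left_conjugate_nonneg hx (algebraMap ℝ A (Real.sqrt r))
  have hsa : star (algebraMap ℝ A (Real.sqrt r)) = algebraMap ℝ A (Real.sqrt r) :=
    IsSelfAdjoint.algebraMap A (isSelfAdjoint_iff.mpr rfl)
  rw [hsa, Algebra.algebraMap_eq_smul_one, smul_mul_assoc, one_mul, mul_smul_comm, mul_one,
    smul_smul, Real.mul_self_sqrt hr] at h
  exact h

lemma myAlgebraMapMono {r s : ℝ} (h : r ≤ s) : algebraMap ℝ A r ≤ algebraMap ℝ A s := by
  have h0 : (0:A) ≤ (s - r) • (1:A) := mySmulNonneg (by linarith) zero_le_one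
  rw [sub_smul] at h0
  have := sub_nonneg.mp h0
  rwa [Algebra.algebraMap_eq_smul_one, Algebra.algebraMap_eq_smul_one]

lemma mySpectralRadiusMulComm (x y : A) :
    spectralRadius ℂ (x * y) = spectralRadius ℂ (y * x) := by
  have key : ∀ u v : A, spectralRadius ℂ (u * v) ≤ spectralRadius ℂ (v * u) := by
    intro u v
    simp only [spectralRadius]
    refine iSup₂_le fun k hk => ?_
    rcases eq_or_ne k 0 with rfl | hk0
    · simp
    · have hmem : k ∈ spectrum ℂ (u * v) \ {0} := ⟨hk, hk0⟩
      rw [spectrum.nonzero_mul_comm] at hmem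
      exact le_iSup₂ (f := fun k (_ : k ∈ spectrum ℂ (v * u)) => (‖k‖₊ : ℝ≥0∞)) k hmem.1
  exact le_antisymm (key x y) (key y x)

lemma mySpecPos {a : A} (ha : 0 ≤ a) (hau : IsUnit a) : ∀ x ∈ spectrum ℝ a, 0 < x := by
  intro x hx
  refine lt_of_le_of_ne (spectrum_nonneg_of_nonneg ha hx) ?_
  rintro rfl
  exact spectrum.zero_notMem ℝ hau hx

lemma mySqrtMono [Nontrivial A] {p : A} {q : Aˣ} (hp : 0 ≤ p) (hpu : IsUnit p)
    (hq : 0 ≤ (q : A)) (h : p ≤ (q : A)) : sqrt p ≤ sqrt (q : A) := by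
  have hp0 : (0:ℝ≥0) ∉ spectrum ℝ≥0 p := spectrum.zero_notMem ℝ≥0 hpu
  have hq0 : (0:ℝ≥0) ∉ spectrum ℝ≥0 (q : A) := spectrum.zero_notMem ℝ≥0 q.isUnit
  -- hypothesis in norm form
  have h1 : ‖sqrt p * sqrt (↑q⁻¹ : A)‖ ≤ 1 := (le_iff_norm_sqrt_mul_sqrt_inv hp hq).mp h
  have hqinv : (↑q⁻¹ : A) = (q : A) ^ (-1 : ℝ) := (CFC.rpow_neg_one_eq_inv q hq).symm
  have e1 : sqrt ((q:A) ^ (-1 : ℝ)) = (q:A) ^ (-(2:ℝ)⁻¹) := by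
    rw [CFC.sqrt_rpow q.isUnit (by norm_num)]; norm_num
  have e2 : sqrt p = p ^ ((2:ℝ)⁻¹) := by rw [CFC.sqrt_eq_rpow]; norm_num
  rw [hqinv, e1, e2] at h1
  -- the key norm estimate one level down
  set u : A := p ^ ((4:ℝ)⁻¹) with hu_def
  set v : A := (q:A) ^ (-(4:ℝ)⁻¹) with hv_def
  have hu : 0 ≤ u := CFC.rpow_nonneg
  have hv : 0 ≤ v := CFC.rpow_nonneg
  have huu : u * u = p ^ ((2:ℝ)⁻¹) := by
    rw [hu_def, ← CFC.rpow_add hpu]; norm_num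
  have hvv : v * v = (q:A) ^ (-(2:ℝ)⁻¹) := by
    rw [hv_def, ← CFC.rpow_add q.isUnit]; norm_num
  have key : ‖u * v‖ ≤ 1 := by
    have hsq : ‖u * v‖ * ‖u * v‖ = ‖(v * u) * (u * v)‖ := by
      rw [← CStarRing.norm_star_mul_self, star_mul,
        (IsSelfAdjoint.of_nonneg hu).star_eq, (IsSelfAdjoint.of_nonneg hv).star_eq]
    have hsa : IsSelfAdjoint ((v * u) * (u * v)) := by
      have : (v * u) * (u * v) = star (u * v) * (u * v) := by
        rw [star_mul, (IsSelfAdjoint.of_nonneg hu).star_eq, (IsSelfAdjoint.of_nonneg hv).star_eq]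
      rw [this]
      exact IsSelfAdjoint.star_mul_self _
    have hrearr : (v * u) * (u * v) = v * ((u * u) * v) := by noncomm_ring
    have hrearr2 : ((u * u) * v) * v = (u * u) * (v * v) := by noncomm_ring
    have hnorm : ‖(v * u) * (u * v)‖₊ ≤ ‖(u * u) * (v * v)‖₊ := by
      have c1 : (‖(v * u) * (u * v)‖₊ : ℝ≥0∞) = spectralRadius ℂ ((v * u) * (u * v)) :=
        hsa.spectralRadius_eq_nnnorm.symm
      have c2 : spectralRadius ℂ ((v * u) * (u * v)) = spectralRadius ℂ ((u * u) * (v * v)) := by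
        rw [hrearr, mySpectralRadiusMulComm v ((u * u) * v), hrearr2]
      have c3 : spectralRadius ℂ ((u * u) * (v * v)) ≤ ‖(u * u) * (v * v)‖₊ :=
        spectrum.spectralRadius_le_nnnorm _
      have := c1 ▸ c2 ▸ c3
      exact_mod_cast this
    have hnorm' : ‖(v * u) * (u * v)‖ ≤ ‖(u * u) * (v * v)‖ := hnorm
    have hfin : ‖u * v‖ * ‖u * v‖ ≤ 1 := by
      rw [hsq]
      calc ‖(v * u) * (u * v)‖ ≤ ‖(u * u) * (v * v)‖ := hnorm'
        _ = ‖p ^ ((2:ℝ)⁻¹) * (q:A) ^ (-(2:ℝ)⁻¹)‖ := by rw [huu, hvv]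
        _ ≤ 1 := h1
    nlinarith [norm_nonneg (u * v)]
  -- build the unit with value `sqrt q`
  have hval : sqrt (q:A) * (q:A) ^ (-(2:ℝ)⁻¹) = 1 := by
    rw [CFC.sqrt_eq_rpow]
    have : ((1:ℝ)/2) = (2:ℝ)⁻¹ := by norm_num
    rw [this]
    exact CFC.rpow_mul_rpow_neg _ (q.isStrictlyPositive_iff.mpr hq)
  have hinvval : (q:A) ^ (-(2:ℝ)⁻¹) * sqrt (q:A) = 1 := by
    rw [CFC.sqrt_eq_rpow]
    have : ((1:ℝ)/2) = (2:ℝ)⁻¹ := by norm_num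
    rw [this]
    exact CFC.rpow_neg_mul_rpow _ (q.isStrictlyPositive_iff.mpr hq)
  have goal' := (le_iff_norm_sqrt_mul_sqrt_inv
    (b := ⟨sqrt (q:A), (q:A) ^ (-(2:ℝ)⁻¹), hval, hinvval⟩)
    (sqrt_nonneg (a := p)) (sqrt_nonneg (a := (q:A)))).mpr
  apply goal'
  show ‖sqrt (sqrt p) * sqrt ((q:A) ^ (-(2:ℝ)⁻¹))‖ ≤ 1
  have e3 : sqrt (sqrt p) = u := by
    rw [e2, CFC.sqrt_rpow hpu (by norm_num : (2:ℝ)⁻¹ ≠ 0), hu_def]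
    norm_num
  have e4 : sqrt ((q:A) ^ (-(2:ℝ)⁻¹)) = v := by
    rw [CFC.sqrt_rpow q.isUnit (by norm_num : -(2:ℝ)⁻¹ ≠ 0), hv_def]
    norm_num
  rw [e3, e4]
  exact key

lemma myLogLim {a : A} (ha : 0 ≤ a) (hau : IsUnit a) :
    Tendsto (fun k : ℕ => (2 ^ k : ℝ) • (a ^ (((2:ℝ)⁻¹) ^ k) - 1)) atTop
      (nhds (cfc Real.log a)) := by
  have hsa : IsSelfAdjoint a := .of_nonneg ha
  have hspos := mySpecPos ha hau
  have hlogcont : ContinuousOn Real.log (spectrum ℝ a) :=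
    Real.continuousOn_log.mono fun x hx => by
      simp only [Set.mem_compl_iff, Set.mem_singleton_iff]
      exact (hspos x hx).ne'
  set L := ‖cfc Real.log a‖ with hL
  have hbound : ∀ x ∈ spectrum ℝ a, |Real.log x| ≤ L := fun x hx => by
    simpa [Real.norm_eq_abs] using norm_apply_le_norm_cfc Real.log a hx hlogcont hsa
  rw [tendsto_iff_norm_sub_tendsto_zero]
  have hg0 : Tendsto (fun k : ℕ => L ^ 2 * ((2:ℝ)⁻¹) ^ k) atTop (nhds 0) := by
    simpa using
      (tendsto_pow_atTop_nhds_zero_of_lt_one (by norm_num : (0:ℝ) ≤ 2⁻¹)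
        (by norm_num : (2:ℝ)⁻¹ < 1)).const_mul (L ^ 2)
  refine squeeze_zero' (Eventually.of_forall fun k => norm_nonneg _) ?_ hg0
  · have hev : ∀ᶠ k : ℕ in atTop, L * ((2:ℝ)⁻¹) ^ k ≤ 1 := by
      have htend : Tendsto (fun k : ℕ => L * ((2:ℝ)⁻¹) ^ k) atTop (nhds 0) := by
        simpa using
          (tendsto_pow_atTop_nhds_zero_of_lt_one (by norm_num : (0:ℝ) ≤ 2⁻¹)
            (by norm_num : (2:ℝ)⁻¹ < 1)).const_mul L
      exact htend.eventually (eventually_le_nhds one_pos)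
    filter_upwards [hev] with k hk
    set t : ℝ := ((2:ℝ)⁻¹) ^ k with ht_def
    have ht0 : 0 ≤ t := by positivity
    have h2t : (2:ℝ) ^ k * t = 1 := by
      rw [ht_def, ← mul_pow]; norm_num
    -- express as a single cfc
    have hfc : Continuous fun x : ℝ => ((x.toNNReal ^ t : ℝ≥0) : ℝ) :=
      NNReal.continuous_coe.comp ((NNReal.continuous_rpow_const ht0).comp
        continuous_real_toNNReal)
    have e0 : a ^ t = cfc (fun x : ℝ => ((x.toNNReal ^ t : ℝ≥0) : ℝ)) a := by
      rw [CFC.rpow_def, cfc_nnreal_eq_real _ a ha]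
    have e1 : cfc (fun x : ℝ => ((x.toNNReal ^ t : ℝ≥0) : ℝ) - 1) a = a ^ t - 1 := by
      rw [cfc_sub _ _ a (hfc.continuousOn) (continuousOn_const), cfc_const_one ℝ a, e0]
    have e2 : cfc (fun x : ℝ => (2:ℝ) ^ k * (((x.toNNReal ^ t : ℝ≥0) : ℝ) - 1)) a
        = (2 ^ k : ℝ) • (a ^ t - 1) := by
      rw [← e1, ← cfc_smul ((2:ℝ)^k) (fun x : ℝ => ((x.toNNReal ^ t : ℝ≥0) : ℝ) - 1) a ((hfc.sub continuous_const).continuousOn)]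
      simp [smul_eq_mul]
    have e3 : (2 ^ k : ℝ) • (a ^ t - 1) - cfc Real.log a
        = cfc (fun x : ℝ => (2:ℝ) ^ k * (((x.toNNReal ^ t : ℝ≥0) : ℝ) - 1) - Real.log x) a := by
      rw [cfc_sub (fun x : ℝ => (2:ℝ) ^ k * (((x.toNNReal ^ t : ℝ≥0) : ℝ) - 1)) Real.log a ((continuous_const.mul (hfc.sub continuous_const)).continuousOn) hlogcont, e2]
    rw [e3]
    refine norm_cfc_le (by positivity) fun x hx => ?_
    have hx0 : 0 < x := hspos x hx
    have hxt : ((x.toNNReal ^ t : ℝ≥0) : ℝ) = x ^ t := by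
      rw [NNReal.coe_rpow, Real.coe_toNNReal x hx0.le]
    set y : ℝ := Real.log x with hy_def
    have hyL : |y| ≤ L := hbound x hx
    set z : ℝ := t * y with hz_def
    have h2z : (2:ℝ) ^ k * z = y := by
      rw [hz_def, ← mul_assoc, h2t, one_mul]
    have hxty : x ^ t = Real.exp z := by
      rw [Real.rpow_def_of_pos hx0, hz_def, hy_def, mul_comm]
    have hzabs : |z| ≤ 1 := by
      rw [hz_def, abs_mul, abs_of_nonneg ht0]
      calc t * |y| ≤ t * L := by
            have := abs_nonneg y
            nlinarith
        _ = L * t := mul_comm _ _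
        _ ≤ 1 := hk
    have hexp : |Real.exp z - 1 - z| ≤ z ^ 2 := Real.abs_exp_sub_one_sub_id_le hzabs
    have hrw : (2:ℝ) ^ k * (((x.toNNReal ^ t : ℝ≥0) : ℝ) - 1) - Real.log x
        = (2:ℝ) ^ k * (Real.exp z - 1 - z) := by
      rw [hxt, hxty, ← hy_def, ← h2z]; ring
    rw [Real.norm_eq_abs, hrw, abs_mul, abs_of_pos (by positivity : (0:ℝ) < (2:ℝ)^k)]
    calc (2:ℝ) ^ k * |Real.exp z - 1 - z| ≤ (2:ℝ) ^ k * z ^ 2 := by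
          have : (0:ℝ) < (2:ℝ)^k := by positivity
          nlinarith
      _ = (2:ℝ) ^ k * (t * y) ^ 2 := by rw [hz_def]
      _ = ((2:ℝ) ^ k * t) * (t * y ^ 2) := by ring
      _ = t * y ^ 2 := by rw [h2t, one_mul]
      _ ≤ L ^ 2 * t := by
          have h1 : y ^ 2 ≤ L ^ 2 := sq_le_sq' (neg_le_of_abs_le hyL) (le_of_abs_le hyL)
          nlinarith

lemma myLogMono [Nontrivial A] {p q : A} (hp : 0 ≤ p) (hq : 0 ≤ q) (hpu : IsUnit p)
    (hqu : IsUnit q) (h : p ≤ q) : cfc Real.log p ≤ cfc Real.log q := by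
  have hp0 : (0:ℝ≥0) ∉ spectrum ℝ≥0 p := spectrum.zero_notMem ℝ≥0 hpu
  have hq0 : (0:ℝ≥0) ∉ spectrum ℝ≥0 q := spectrum.zero_notMem ℝ≥0 hqu
  have key : ∀ k : ℕ, p ^ (((2:ℝ)⁻¹) ^ k) ≤ q ^ (((2:ℝ)⁻¹) ^ k) := by
    intro k
    induction k with
    | zero => simpa [pow_zero, CFC.rpow_one p hp, CFC.rpow_one q hq] using h
    | succ k ih =>
      set t : ℝ := ((2:ℝ)⁻¹) ^ k with ht_def
      have ht0 : t ≠ 0 := by positivity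
      have hPk : IsUnit (p ^ t) :=
        ⟨⟨p ^ t, p ^ (-t), CFC.rpow_mul_rpow_neg t (hpu.isStrictlyPositive hp), CFC.rpow_neg_mul_rpow t (hpu.isStrictlyPositive hp)⟩, rfl⟩
      have hQk : Aˣ :=
        ⟨q ^ t, q ^ (-t), CFC.rpow_mul_rpow_neg t (hqu.isStrictlyPositive hq), CFC.rpow_neg_mul_rpow t (hqu.isStrictlyPositive hq)⟩
      have hmono := mySqrtMono (p := p ^ t)
        (q := ⟨q ^ t, q ^ (-t), CFC.rpow_mul_rpow_neg t (hqu.isStrictlyPositive hq), CFC.rpow_neg_mul_rpow t (hqu.isStrictlyPositive hq)⟩)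
        CFC.rpow_nonneg hPk CFC.rpow_nonneg ih
      have ht2 : t / 2 = ((2:ℝ)⁻¹) ^ (k + 1) := by rw [ht_def, pow_succ]; ring
      rwa [show ((⟨q ^ t, q ^ (-t), CFC.rpow_mul_rpow_neg t (hqu.isStrictlyPositive hq),
          CFC.rpow_neg_mul_rpow t (hqu.isStrictlyPositive hq)⟩ : Aˣ) : A) = q ^ t from rfl,
        CFC.sqrt_rpow hpu ht0, CFC.sqrt_rpow hqu ht0, ht2] at hmono
  refine le_of_tendsto_of_tendsto' (myLogLim hp hpu) (myLogLim hq hqu) fun k => ?_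
  have h0 : (0:A) ≤ (2 ^ k : ℝ) • ((q ^ (((2:ℝ)⁻¹) ^ k) - 1) - (p ^ (((2:ℝ)⁻¹) ^ k) - 1)) :=
    mySmulNonneg (by positivity) (sub_nonneg.2 (sub_le_sub_right (key k) 1))
  rw [smul_sub] at h0
  exact sub_nonneg.1 h0

end Aux

section Conj

variable {A : Type*} [CStarAlgebra A]

/-- Conjugation by a unitary as a star algebra homomorphism. -/
noncomputable def myConjHom (u : A) (hu : u ∈ unitary A) : A →⋆ₐ[ℂ] A where
  toFun x := u * x * star u
  map_one' := by
    show u * 1 * star u = 1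
    rw [mul_one]; exact Unitary.mul_star_self_of_mem hu
  map_mul' x y := by
    have h := Unitary.star_mul_self_of_mem hu
    calc u * (x * y) * star u = (u * x) * (star u * u) * (y * star u) := by
          rw [h]; noncomm_ring
      _ = (u * x * star u) * (u * y * star u) := by noncomm_ring
  map_zero' := by simp
  map_add' x y := by noncomm_ring
  commutes' r := by
    show u * algebraMap ℂ A r * star u = algebraMap ℂ A r
    rw [Algebra.algebraMap_eq_smul_one, mul_smul_comm, mul_one, smul_mul_assoc,
      Unitary.mul_star_self_of_mem hu]
  map_star' x := by simp [star_mul, mul_assoc]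

lemma myConjCfc (u : A) (hu : u ∈ unitary A) (f : ℝ → ℝ) (a : A) (hsa : IsSelfAdjoint a)
    (hf : ContinuousOn f (spectrum ℝ a)) :
    u * cfc f a * star u = cfc f (u * a * star u) := by
  have hφa : IsSelfAdjoint (u * a * star u) := by
    rw [isSelfAdjoint_iff]
    simp only [star_mul, star_star, hsa.star_eq, mul_assoc]
  have hφc : Continuous (myConjHom u hu) := by
    show Continuous fun x : A => u * x * star u
    fun_prop
  exact StarAlgHom.map_cfc (myConjHom u hu) f a hf hφc hsa hφa

end Conj

section Main

variable {A : Type*} [CStarAlgebra A] [PartialOrder A] [StarOrderedRing A]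

lemma mySmulMono {r : ℝ} (hr : 0 ≤ r) {x y : A} (h : x ≤ y) : r • x ≤ r • y := by
  have h0 := mySmulNonneg hr (sub_nonneg.2 h)
  rw [smul_sub] at h0
  exact sub_nonneg.1 h0

lemma mySqCompare {x : A} {P Q : Aˣ} (hQ_sa : IsSelfAdjoint (Q:A))
    (hQinv_sa : star ((Q⁻¹:Aˣ):A) = ((Q⁻¹:Aˣ):A)) (hP_sa : IsSelfAdjoint (P:A))
    (hx : x = (P:A) * ((Q⁻¹:Aˣ):A)) {c : ℝ} (hc : ‖x‖ ≤ c) :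
    (P:A) * (P:A) ≤ c ^ 2 • ((Q:A) * (Q:A)) := by
  have h := CStarAlgebra.star_mul_le_algebraMap_norm_sq (a := x)
  have h' : star x * x ≤ algebraMap ℝ A (c ^ 2) :=
    h.trans (myAlgebraMapMono (by nlinarith [norm_nonneg x]))
  have hsx : star x = ((Q⁻¹:Aˣ):A) * (P:A) := by rw [hx, star_mul, hQinv_sa, hP_sa.star_eq]
  have h'' := hQ_sa.conjugate_le_conjugate h'
  have hL : (Q:A) * (star x * x) * (Q:A) = (P:A) * (P:A) := by
    rw [hsx, hx]
    calc (Q:A) * (((Q⁻¹:Aˣ):A) * (P:A) * ((P:A) * ((Q⁻¹:Aˣ):A))) * (Q:A)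
        = ((Q:A) * ((Q⁻¹:Aˣ):A)) * ((P:A) * (P:A)) * (((Q⁻¹:Aˣ):A) * (Q:A)) := by
          noncomm_ring
      _ = (P:A) * (P:A) := by rw [Units.mul_inv, Units.inv_mul, one_mul, mul_one]
  have hR : (Q:A) * algebraMap ℝ A (c ^ 2) * (Q:A) = c ^ 2 • ((Q:A) * (Q:A)) := by
    rw [Algebra.algebraMap_eq_smul_one, mul_smul_comm, mul_one, smul_mul_assoc]
  rw [hL, hR] at h''
  exact h''

lemma myMain [Nontrivial A] (s : Aˣ) (hs_sa : IsSelfAdjoint (s:A)) (hs_nn : 0 ≤ (s:A))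
    (U : A) (hU : U ∈ unitary A) (c : ℝ) (hc : 1 ≤ c)
    (h1 : ‖(s:A) * U * ((s⁻¹:Aˣ):A)‖ ≤ c) (h2 : ‖(s:A) * star U * ((s⁻¹:Aˣ):A)‖ ≤ c) :
    ‖cfc Real.log (s:A) * U - U * cfc Real.log (s:A)‖ ≤ Real.log c := by
  have hU1 : star U * U = 1 := Unitary.star_mul_self_of_mem hU
  have hU2 : U * star U = 1 := Unitary.mul_star_self_of_mem hU
  have hUnorm : ‖U‖ ≤ 1 := by
    have h : ‖star U * U‖ = ‖U‖ * ‖U‖ := CStarRing.norm_star_mul_self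
    rw [hU1, norm_one] at h
    nlinarith [norm_nonneg U]
  have hUstar_norm : ‖star U‖ ≤ 1 := by rw [norm_star]; exact hUnorm
  set a : A := (s:A) with ha_def
  have hsinv_sa : star ((s⁻¹:Aˣ):A) = ((s⁻¹:Aˣ):A) := by
    have hone : star ((s⁻¹:Aˣ):A) * a = 1 := by
      calc star ((s⁻¹:Aˣ):A) * a = star ((s⁻¹:Aˣ):A) * star a := by rw [hs_sa.star_eq]
        _ = star (a * ((s⁻¹:Aˣ):A)) := (star_mul _ _).symm
        _ = 1 := by rw [ha_def, Units.mul_inv, star_one]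
    calc star ((s⁻¹:Aˣ):A) = star ((s⁻¹:Aˣ):A) * (a * ((s⁻¹:Aˣ):A)) := by
          rw [ha_def, Units.mul_inv, mul_one]
      _ = (star ((s⁻¹:Aˣ):A) * a) * ((s⁻¹:Aˣ):A) := by rw [mul_assoc]
      _ = ((s⁻¹:Aˣ):A) := by rw [hone, one_mul]
  set uU : Aˣ := ⟨U, star U, hU2, hU1⟩ with huU
  set Bu : Aˣ := uU * s * uU⁻¹ with hBu
  set b : A := U * a * star U with hb
  have hBu_coe : (Bu : A) = b := rfl
  have hBuinv : Bu⁻¹ = uU * s⁻¹ * uU⁻¹ := by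
    rw [hBu, mul_inv_rev, mul_inv_rev, inv_inv, mul_assoc]
  have hBu_inv_coe : ((Bu⁻¹:Aˣ):A) = U * ((s⁻¹:Aˣ):A) * star U := by rw [hBuinv]; rfl
  have hb_sa : IsSelfAdjoint b := by
    rw [isSelfAdjoint_iff]
    simp only [hb, star_mul, star_star, hs_sa.star_eq, mul_assoc]
  have hb_nn : 0 ≤ b := by
    have h0 := star_left_conjugate_nonneg hs_nn (star U)
    rwa [star_star] at h0
  have hbinv_sa : star ((Bu⁻¹:Aˣ):A) = ((Bu⁻¹:Aˣ):A) := by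
    rw [hBu_inv_coe]
    simp only [star_mul, star_star, hsinv_sa, mul_assoc]
  -- the two squared inequalities
  have hsq1 : a * a ≤ c ^ 2 • (b * b) := by
    refine mySqCompare (Q := Bu) hb_sa hbinv_sa hs_sa rfl ?_
    have e : a * ((Bu⁻¹:Aˣ):A) = (a * U * ((s⁻¹:Aˣ):A)) * star U := by
      rw [hBu_inv_coe]; noncomm_ring
    rw [e]
    calc ‖(a * U * ((s⁻¹:Aˣ):A)) * star U‖ ≤ ‖a * U * ((s⁻¹:Aˣ):A)‖ * ‖star U‖ := norm_mul_le _ _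
      _ ≤ c * 1 := by
          exact mul_le_mul h1 hUstar_norm (norm_nonneg _) (by linarith)
      _ = c := mul_one c
  have hsq2 : b * b ≤ c ^ 2 • (a * a) := by
    refine mySqCompare (P := Bu) (Q := s) hs_sa hsinv_sa hb_sa rfl ?_
    have e : (Bu:A) * ((s⁻¹:Aˣ):A) = U * (a * star U * ((s⁻¹:Aˣ):A)) := by
      rw [hBu_coe, hb]; noncomm_ring
    rw [e]
    calc ‖U * (a * star U * ((s⁻¹:Aˣ):A))‖ ≤ ‖U‖ * ‖a * star U * ((s⁻¹:Aˣ):A)‖ := norm_mul_le _ _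
      _ ≤ 1 * c := mul_le_mul hUnorm h2 (norm_nonneg _) zero_le_one
      _ = c := one_mul c
  -- positivity and invertibility facts
  have haa_nn : 0 ≤ a * a := by simpa [hs_sa.star_eq] using star_mul_self_nonneg a
  have hbb_nn : 0 ≤ b * b := by simpa [hb_sa.star_eq] using star_mul_self_nonneg b
  have haa_unit : IsUnit (a * a) := by
    have := (s * s).isUnit
    rwa [Units.val_mul] at this
  have hbb_unit : IsUnit (b * b) := by
    have := (Bu * Bu).isUnit
    rwa [Units.val_mul, hBu_coe] at this
  have hc2pos : (0:ℝ) < c ^ 2 := by positivity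
  have hsmul_nn : ∀ {x : A}, 0 ≤ x → 0 ≤ c ^ 2 • x := fun hx => mySmulNonneg hc2pos.le hx
  have hsmul_unit : ∀ {x : A}, IsUnit x → IsUnit (c ^ 2 • x) := by
    intro x hx
    rw [Algebra.smul_def]
    exact ((isUnit_iff_ne_zero.2 hc2pos.ne').map (algebraMap ℝ A)).mul hx
  -- apply log monotonicity
  have hlog1 : CFC.log (a * a) ≤ CFC.log (c ^ 2 • (b * b)) :=
    myLogMono haa_nn (hsmul_nn hbb_nn) haa_unit (hsmul_unit hbb_unit) hsq1
  have hlog2 : CFC.log (b * b) ≤ CFC.log (c ^ 2 • (a * a)) :=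
    myLogMono hbb_nn (hsmul_nn haa_nn) hbb_unit (hsmul_unit haa_unit) hsq2
  -- unfold the logs
  have hspec_a : ∀ x ∈ spectrum ℝ a, 0 < x := mySpecPos hs_nn s.isUnit
  have hspec_b : ∀ x ∈ spectrum ℝ b, 0 < x := mySpecPos hb_nn (hBu_coe ▸ Bu.isUnit)
  have hspec_aa : ∀ x ∈ spectrum ℝ (a * a), 0 < x := mySpecPos haa_nn haa_unit
  have hspec_bb : ∀ x ∈ spectrum ℝ (b * b), 0 < x := mySpecPos hbb_nn hbb_unit
  have haa_sa : IsSelfAdjoint (a * a) := IsSelfAdjoint.of_nonneg haa_nn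
  have hbb_sa : IsSelfAdjoint (b * b) := IsSelfAdjoint.of_nonneg hbb_nn
  have elog_aa : CFC.log (a * a) = (2:ℕ) • CFC.log a := by
    rw [show a * a = a ^ 2 from (sq a).symm]
    exact CFC.log_pow 2 a (fun x hx => (hspec_a x hx).ne') hs_sa
  have elog_bb : CFC.log (b * b) = (2:ℕ) • CFC.log b := by
    rw [show b * b = b ^ 2 from (sq b).symm]
    exact CFC.log_pow 2 b (fun x hx => (hspec_b x hx).ne') hb_sa
  have elog_smul_bb : CFC.log (c ^ 2 • (b * b))
      = algebraMap ℝ A (2 * Real.log c) + (2:ℕ) • CFC.log b := by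
    rw [CFC.log_smul (b * b) (fun x hx => (hspec_bb x hx).ne') hc2pos.ne' hbb_sa, elog_bb]
    congr 1
    rw [show (2 : ℝ) * Real.log c = Real.log (c ^ 2) by
      rw [Real.log_pow]; push_cast; ring]
  have elog_smul_aa : CFC.log (c ^ 2 • (a * a))
      = algebraMap ℝ A (2 * Real.log c) + (2:ℕ) • CFC.log a := by
    rw [CFC.log_smul (a * a) (fun x hx => (hspec_aa x hx).ne') hc2pos.ne' haa_sa, elog_aa]
    congr 1
    rw [show (2 : ℝ) * Real.log c = Real.log (c ^ 2) by
      rw [Real.log_pow]; push_cast; ring]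
  -- halving
  have halve : ∀ {X Y : A}, (2:ℕ) • X ≤ algebraMap ℝ A (2 * Real.log c) + (2:ℕ) • Y →
      X ≤ algebraMap ℝ A (Real.log c) + Y := by
    intro X Y hXY
    have h2X : ((2:ℝ))⁻¹ • ((2:ℕ) • X) = X := by
      rw [← Nat.cast_smul_eq_nsmul ℝ, smul_smul]; norm_num
    have h2Y : ((2:ℝ))⁻¹ • ((2:ℕ) • Y) = Y := by
      rw [← Nat.cast_smul_eq_nsmul ℝ, smul_smul]; norm_num
    have h3 : ((2:ℝ))⁻¹ • (algebraMap ℝ A (2 * Real.log c)) = algebraMap ℝ A (Real.log c) := by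
      rw [Algebra.algebraMap_eq_smul_one (R := ℝ) (A := A) (2 * Real.log c),
        Algebra.algebraMap_eq_smul_one (R := ℝ) (A := A) (Real.log c), smul_smul]
      congr 1
      ring
    calc X = ((2:ℝ))⁻¹ • ((2:ℕ) • X) := h2X.symm
      _ ≤ ((2:ℝ))⁻¹ • (algebraMap ℝ A (2 * Real.log c) + (2:ℕ) • Y) :=
          mySmulMono (by norm_num) hXY
      _ = algebraMap ℝ A (Real.log c) + Y := by rw [smul_add, h3, h2Y]
  have hhalf1 : CFC.log a ≤ algebraMap ℝ A (Real.log c) + CFC.log b := by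
    apply halve
    rw [← elog_aa, ← elog_smul_bb]
    exact hlog1
  have hhalf2 : CFC.log b ≤ algebraMap ℝ A (Real.log c) + CFC.log a := by
    apply halve
    rw [← elog_bb, ← elog_smul_aa]
    exact hlog2
  -- conjugation identity
  have hlogcont_a : ContinuousOn Real.log (spectrum ℝ a) :=
    Real.continuousOn_log.mono fun x hx => by
      simp only [Set.mem_compl_iff, Set.mem_singleton_iff]
      exact (hspec_a x hx).ne'
  have hlog_conj : U * CFC.log a * star U = CFC.log b :=
    myConjCfc U hU Real.log a hs_sa hlogcont_a
  -- assemble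
  set D : A := CFC.log a - CFC.log b with hD
  have hD_sa : IsSelfAdjoint D := ((cfc_predicate Real.log a).sub (cfc_predicate Real.log b))
  have hgoal_eq : cfc Real.log a * U - U * cfc Real.log a = D * U := by
    have hbU : CFC.log b * U = U * CFC.log a := by
      rw [← hlog_conj, mul_assoc (U * CFC.log a) (star U) U, hU1, mul_one]
    rw [hD, sub_mul, hbU]
    rfl
  have hD1 : D ≤ algebraMap ℝ A (Real.log c) := by
    rw [hD]
    exact sub_le_iff_le_add.2 hhalf1
  have hD2 : algebraMap ℝ A (-Real.log c) ≤ D := by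
    rw [map_neg]
    have h4 : CFC.log b - CFC.log a ≤ algebraMap ℝ A (Real.log c) := sub_le_iff_le_add.2 hhalf2
    calc -(algebraMap ℝ A (Real.log c)) ≤ -(CFC.log b - CFC.log a) := neg_le_neg h4
      _ = D := by rw [neg_sub, hD]
  have hspec1 : ∀ x ∈ spectrum ℝ D, x ≤ Real.log c :=
    (le_algebraMap_iff_spectrum_le (a := D) hD_sa).mp hD1
  have hspec2 : ∀ x ∈ spectrum ℝ D, -Real.log c ≤ x :=
    (algebraMap_le_iff_le_spectrum (a := D) hD_sa).mp hD2
  have hDnorm : ‖D‖ ≤ Real.log c := by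
    have hid : cfc (id : ℝ → ℝ) D = D := cfc_id ℝ D hD_sa
    rw [← hid]
    refine norm_cfc_le (Real.log_nonneg hc) fun x hx => ?_
    rw [Real.norm_eq_abs, id]
    exact abs_le.2 ⟨hspec2 x hx, hspec1 x hx⟩
  calc ‖cfc Real.log a * U - U * cfc Real.log a‖ = ‖D * U‖ := by rw [hgoal_eq]
    _ ≤ ‖D‖ * ‖U‖ := norm_mul_le _ _
    _ ≤ Real.log c * 1 := mul_le_mul hDnorm hUnorm (norm_nonneg _) (Real.log_nonneg hc)
    _ = Real.log c := mul_one _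

end Main

/-- Kirchberg-type derivation estimate: if `S` is positive invertible, `U` is unitary,
`‖S U S⁻¹‖ ≤ c` and `‖S U⁻¹ S⁻¹‖ ≤ c` (with `U⁻¹ = U* = star U`), then the commutator
`(log S)·U − U·(log S)` has norm at most `log c`. Here `log S` is defined via the
continuous functional calculus. -/
theorem statement17 (H : Type*) [NormedAddCommGroup H] [InnerProductSpace ℂ H]
    [CompleteSpace H] (S : (H →L[ℂ] H)ˣ) (hS : (↑S : H →L[ℂ] H).IsPositive)
    (U : H →L[ℂ] H) (hU : U ∈ unitary (H →L[ℂ] H)) (c : ℝ) (hc : 1 ≤ c)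
    (h1 : ‖(↑S : H →L[ℂ] H) * U * (↑S⁻¹ : H →L[ℂ] H)‖ ≤ c)
    (h2 : ‖(↑S : H →L[ℂ] H) * star U * (↑S⁻¹ : H →L[ℂ] H)‖ ≤ c) :
    ‖cfc Real.log (↑S : H →L[ℂ] H) * U - U * cfc Real.log (↑S : H →L[ℂ] H)‖ ≤
      Real.log c := by
  rcases subsingleton_or_nontrivial (H →L[ℂ] H) with hsub | hnt
  · have h0 : (cfc Real.log (↑S : H →L[ℂ] H) * U - U * cfc Real.log (↑S : H →L[ℂ] H)) = 0 :=
      Subsingleton.elim _ _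
    rw [h0, norm_zero]
    exact Real.log_nonneg hc
  · exact myMain S hS.isSelfAdjoint
      ((ContinuousLinearMap.nonneg_iff_isPositive _).mpr hS) U hU c hc h1 h2
end

section
/- Let N ≥ 1 be an integer, let Γ ⊆ ℤ^N be the set of elements having at most one non-zero coordinate, let H be a complex Hilbert space, let c ≥ 1, and let π be a group homomorphism from ℤ^N into the group of invertible bounded linear operators on H such that ‖π(t)‖ ≤ c for all t ∈ Γ. Then there is an invertible bounded operator S : H → H with ‖S‖·‖S⁻¹‖ ≤ c^{2N} such that S⁻¹ π(t) S is a unitary operator for every t ∈ ℤ^N. -/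
open scoped InnerProductSpace
open Filter
open scoped NNReal

set_option maxHeartbeats 2000000 in
/-- Dixmier-type bound for `ℤ^N`: if `π` is a representation of `ℤ^N` on a complex Hilbert
space with `‖π(t)‖ ≤ c` for every `t` having at most one non-zero coordinate, then there
is an invertible `S` with `‖S‖·‖S⁻¹‖ ≤ c^{2N}` such that `S⁻¹ π(t) S` is unitary for all
`t ∈ ℤ^N`. -/
theorem statement18 (N : ℕ) (hN : 1 ≤ N) (H : Type*) [NormedAddCommGroup H]
    [InnerProductSpace ℂ H] [CompleteSpace H] (c : ℝ) (hc : 1 ≤ c)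
    (π : (Fin N → ℤ) → (H →L[ℂ] H)ˣ)
    (hhom : ∀ s t : Fin N → ℤ, π (s + t) = π s * π t)
    (hbd : ∀ t : Fin N → ℤ, (∀ i j : Fin N, t i ≠ 0 → t j ≠ 0 → i = j) →
      ‖(↑(π t) : H →L[ℂ] H)‖ ≤ c) :
    ∃ S : (H →L[ℂ] H)ˣ,
      ‖(↑S : H →L[ℂ] H)‖ * ‖(↑S⁻¹ : H →L[ℂ] H)‖ ≤ c ^ (2 * N) ∧
      ∀ t : Fin N → ℤ,
        ((↑S⁻¹ * ↑(π t) * ↑S : H →L[ℂ] H)) ∈ unitary (H →L[ℂ] H) := by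
  set E := H →L[ℂ] H
  obtain ⟨A, hA_sa, hA_lb, hA_ub, hA_inv⟩ :
      ∃ A : E, IsSelfAdjoint A ∧ algebraMap ℝ E (((c ^ N) ^ 2)⁻¹) ≤ A ∧
        A ≤ algebraMap ℝ E ((c ^ N) ^ 2) ∧
        ∀ t : Fin N → ℤ, star ((π t : E)) * A * (π t : E) = A := by
    classical
    -- basic homomorphism facts
    have hπ0 : π 0 = 1 := by
      have h : π 0 * π 0 = π 0 * 1 := by
        rw [mul_one, ← hhom 0 0, add_zero]
      exact mul_left_cancel h
    have hπneg : ∀ t : Fin N → ℤ, π (-t) = (π t)⁻¹ := by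
      intro t
      apply eq_inv_of_mul_eq_one_left
      rw [← hhom, neg_add_cancel, hπ0]
    have hπmul : ∀ s t : Fin N → ℤ, (π (s + t) : E) = (π s : E) * (π t : E) := by
      intro s t; rw [hhom]; rfl
    -- norm bound for all t
    have hcN : (0:ℝ) < c ^ N := by positivity
    have hlistprod : ∀ l : List (Fin N → ℤ), π l.sum = (l.map π).prod := by
      intro l
      induction l with
      | nil => simpa using hπ0
      | cons a l ih => rw [List.sum_cons, hhom, ih, List.map_cons, List.prod_cons]
    have hlistnorm : ∀ l : List E, (∀ x ∈ l, ‖x‖ ≤ c) → ‖l.prod‖ ≤ c ^ l.length := by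
      intro l
      induction l with
      | nil =>
        intro _
        simpa using (show ‖(1 : E)‖ ≤ 1 from ContinuousLinearMap.norm_id_le)
      | cons a l ih =>
        intro h
        rw [List.prod_cons, List.length_cons, pow_succ']
        refine le_trans (norm_mul_le _ _) (mul_le_mul (h a List.mem_cons_self)
          (ih fun x hx => h x (List.mem_cons_of_mem a hx)) (norm_nonneg _)
          (le_trans zero_le_one hc))
    have hbd' : ∀ t : Fin N → ℤ, ‖(π t : E)‖ ≤ c ^ N := by
      intro t
      have ht : t = (List.ofFn (fun i => Pi.single i (t i))).sum := by
        rw [List.sum_ofFn]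
        exact (Finset.univ_sum_single t).symm
      have h1 : (π t : E) = ((List.ofFn (fun i => Pi.single i (t i))).map
          (fun s => (π s : E))).prod := by
        conv_lhs => rw [ht]
        rw [hlistprod]
        have := map_list_prod (Units.coeHom E) ((List.ofFn (fun i => Pi.single i (t i))).map π)
        simp only [Units.coeHom_apply] at this
        rw [this, List.map_map]
        rfl
      rw [h1]
      have h2 := hlistnorm ((List.ofFn (fun i => Pi.single i (t i))).map (fun s => (π s : E)))
        (by
          intro x hx
          rw [List.mem_map] at hx
          obtain ⟨s, hs, rfl⟩ := hx
          rw [List.mem_ofFn] at hs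
          obtain ⟨i, rfl⟩ := hs
          refine hbd _ (fun i' j' hi' hj' => ?_)
          have hi2 : i' = i := by
            by_contra hne
            exact hi' (Pi.single_eq_of_ne hne _)
          have hj2 : j' = i := by
            by_contra hne
            exact hj' (Pi.single_eq_of_ne hne _)
          rw [hi2, hj2])
      simpa using h2
    have hlow : ∀ (t : Fin N → ℤ) (x : H), ‖x‖ ≤ c ^ N * ‖(π t : E) x‖ := by
      intro t x
      have h1 : (π (-t) : E) ((π t : E) x) = x := by
        rw [← ContinuousLinearMap.mul_apply, ← hπmul, neg_add_cancel, hπ0]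
        rfl
      calc ‖x‖ = ‖(π (-t) : E) ((π t : E) x)‖ := by rw [h1]
        _ ≤ ‖(π (-t) : E)‖ * ‖(π t : E) x‖ := ContinuousLinearMap.le_opNorm _ _
        _ ≤ c ^ N * ‖(π t : E) x‖ :=
            mul_le_mul_of_nonneg_right (hbd' _) (norm_nonneg _)
    -- the boxes
    set B : ℕ → Finset (Fin N → ℤ) :=
      fun n => Fintype.piFinset (fun _ => Finset.Icc (-(n:ℤ)) n) with hBdef
    have hBcard : ∀ n, (B n).card = (2*n+1)^N := by
      intro n
      have h1 : (Finset.Icc (-(n:ℤ)) n).card = 2*n+1 := by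
        rw [Int.card_Icc]; omega
      calc (B n).card = ∏ _i : Fin N, (Finset.Icc (-(n:ℤ)) n).card :=
            Fintype.card_piFinset _
        _ = ∏ _i : Fin N, (2*n+1) := by rw [h1]
        _ = (2*n+1)^N := by
            rw [Finset.prod_const, Finset.card_univ, Fintype.card_fin]
    have hBpos : ∀ n, 0 < ((B n).card : ℝ) := by
      intro n
      rw [hBcard]
      positivity
    -- averages
    set avg : ℕ → H → H → ℂ := fun n x y =>
      (((B n).card : ℂ))⁻¹ * ∑ t ∈ B n, (inner ℂ ((π t : E) x) ((π t : E) y) : ℂ) with havgdef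
    have hterm : ∀ (t : Fin N → ℤ) (x y : H),
        ‖(inner ℂ ((π t : E) x) ((π t : E) y) : ℂ)‖ ≤ (c^N * ‖x‖) * (c^N * ‖y‖) := by
      intro t x y
      refine le_trans (norm_inner_le_norm _ _) (mul_le_mul ?_ ?_ (norm_nonneg _) ?_)
      · exact le_trans (ContinuousLinearMap.le_opNorm _ _)
          (mul_le_mul_of_nonneg_right (hbd' t) (norm_nonneg _))
      · exact le_trans (ContinuousLinearMap.le_opNorm _ _)
          (mul_le_mul_of_nonneg_right (hbd' t) (norm_nonneg _))
      · positivity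
    have havg_bd : ∀ (n : ℕ) (x y : H), ‖avg n x y‖ ≤ (c^N * ‖x‖) * (c^N * ‖y‖) := by
      intro n x y
      simp only [havgdef]
      simp only [norm_mul, norm_inv, Complex.norm_natCast]
      calc (((B n).card : ℝ))⁻¹ * ‖∑ t ∈ B n, (inner ℂ ((π t : E) x) ((π t : E) y) : ℂ)‖
          ≤ (((B n).card : ℝ))⁻¹ * ((B n).card * ((c^N * ‖x‖) * (c^N * ‖y‖))) := by
            refine mul_le_mul_of_nonneg_left ?_ (by positivity)
            refine le_trans (norm_sum_le _ _) ?_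
            rw [← nsmul_eq_mul]
            exact Finset.sum_le_card_nsmul _ _ _ (fun t _ => hterm t x y)
        _ = (c^N * ‖x‖) * (c^N * ‖y‖) := by
            rw [← mul_assoc, inv_mul_cancel₀ (hBpos n).ne', one_mul]
    -- ultrafilter limit
    set U : Ultrafilter ℕ := Ultrafilter.of Filter.atTop with hUdef
    have hUle : (U : Filter ℕ) ≤ Filter.atTop := Ultrafilter.of_le _
    have hex : ∀ x y : H, ∃ z : ℂ, Filter.Tendsto (fun n => avg n x y) U (nhds z) := by
      intro x y
      obtain ⟨z, _, hz⟩ := (isCompact_closedBall (0:ℂ) ((c^N * ‖x‖) * (c^N * ‖y‖))).ultrafilter_le_nhds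
        (U.map (fun n => avg n x y))
        (by
          rw [Filter.le_principal_iff, Ultrafilter.mem_coe, Ultrafilter.mem_map]
          refine Filter.univ_mem' (fun n => ?_)
          simp only [Set.mem_preimage, Metric.mem_closedBall, dist_zero_right]
          exact havg_bd n x y)
      exact ⟨z, hz⟩
    set L : H → H → ℂ := fun x y => limUnder (U : Filter ℕ) (fun n => avg n x y) with hLdef
    have hL : ∀ x y : H, Filter.Tendsto (fun n => avg n x y) U (nhds (L x y)) := by
      intro x y
      obtain ⟨z, hz⟩ := hex x y
      have hxy : L x y = z := hz.limUnder_eq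
      rw [hxy]
      exact hz
    -- properties of L
    have hL_bd : ∀ x y : H, ‖L x y‖ ≤ (c^N * ‖x‖) * (c^N * ‖y‖) := by
      intro x y
      exact le_of_tendsto' (hL x y).norm (fun n => havg_bd n x y)
    have hL_add_right : ∀ x y z : H, L x (y + z) = L x y + L x z := by
      intro x y z
      refine tendsto_nhds_unique (hL x (y+z)) ?_
      have h1 : (fun n => avg n x y + avg n x z) = fun n => avg n x (y + z) := by
        funext n
        simp only [havgdef, map_add, inner_add_right, Finset.sum_add_distrib, mul_add]
      rw [← h1]
      exact (hL x y).add (hL x z)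
    have hL_smul_right : ∀ (a : ℂ) (x y : H), L x (a • y) = a * L x y := by
      intro a x y
      refine tendsto_nhds_unique (hL x (a • y)) ?_
      have h1 : ∀ n, avg n x (a • y) = a * avg n x y := by
        intro n
        simp only [havgdef, map_smul, inner_smul_right, ← Finset.mul_sum]
        ring
      have h2 := (hL x y).const_mul a
      rw [show (fun n => a * avg n x y) = (fun n => avg n x (a • y)) from
        funext fun n => (h1 n).symm] at h2
      exact h2
    have hL_conj : ∀ x y : H, L y x = starRingEnd ℂ (L x y) := by
      intro x y
      refine tendsto_nhds_unique (hL y x) ?_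
      have h1 : ∀ n, avg n y x = starRingEnd ℂ (avg n x y) := by
        intro n
        simp only [havgdef, map_mul, map_inv₀, Complex.conj_natCast, map_sum, inner_conj_symm]
      have h2 := (Complex.continuous_conj.tendsto (L x y)).comp (hL x y)
      rw [show ((starRingEnd ℂ) ∘ fun n => avg n x y) = (fun n => avg n y x) from
        funext fun n => (h1 n).symm] at h2
      exact h2
    have hL_add_left : ∀ x y z : H, L (x + y) z = L x z + L y z := by
      intro x y z
      rw [hL_conj, hL_add_right, map_add, ← hL_conj, ← hL_conj]
    have hL_smul_left : ∀ (a : ℂ) (x y : H), L (a • x) y = starRingEnd ℂ a * L x y := by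
      intro a x y
      rw [hL_conj y (a • x), hL_smul_right a y x, map_mul, ← hL_conj]
    have hre_mul : ∀ (r : ℝ) (z : ℂ), RCLike.re ((r:ℂ) * z) = r * RCLike.re z := by
      intro r z
      simp [RCLike.re_to_complex, Complex.re_ofReal_mul]
    have havg_re : ∀ (n : ℕ) (x y : H), RCLike.re (avg n x y)
        = (((B n).card : ℝ))⁻¹ * ∑ t ∈ B n, (inner ℂ ((π t : E) x) ((π t : E) y) : ℂ).re := by
      intro n x y
      simp only [havgdef, RCLike.re_to_complex]
      rw [show (((B n).card : ℂ))⁻¹ = Complex.ofReal ((((B n).card : ℝ))⁻¹) by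
        push_cast; ring]
      rw [Complex.re_ofReal_mul, Complex.re_sum]
    -- diagonal bounds for avg
    have hdiag_lb : ∀ (n : ℕ) (x : H),
        ((c^N)^2)⁻¹ * ‖x‖^2 ≤ RCLike.re (avg n x x) := by
      intro n x
      have hptw : ∀ t ∈ B n, ((c^N)^2)⁻¹ * ‖x‖^2
          ≤ RCLike.re (inner ℂ ((π t : E) x) ((π t : E) x) : ℂ) := by
        intro t _
        rw [inner_self_eq_norm_sq]
        have h1 := hlow t x
        have h2 : ‖x‖^2 ≤ (c^N)^2 * ‖(π t : E) x‖^2 := by nlinarith [norm_nonneg x]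
        calc ((c^N)^2)⁻¹ * ‖x‖^2 ≤ ((c^N)^2)⁻¹ * ((c^N)^2 * ‖(π t : E) x‖^2) :=
              mul_le_mul_of_nonneg_left h2 (by positivity)
          _ = ‖(π t : E) x‖^2 := by field_simp
      rw [havg_re]
      have hsum : ((B n).card) • (((c^N)^2)⁻¹ * ‖x‖^2)
          ≤ ∑ t ∈ B n, (inner ℂ ((π t : E) x) ((π t : E) x) : ℂ).re :=
        Finset.card_nsmul_le_sum _ _ _ (fun t ht => by
          have := hptw t ht
          rwa [RCLike.re_to_complex] at this)
      rw [nsmul_eq_mul] at hsum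
      calc ((c^N)^2)⁻¹ * ‖x‖^2
          = (((B n).card : ℝ))⁻¹ * (((B n).card : ℝ) * (((c^N)^2)⁻¹ * ‖x‖^2)) := by
            rw [← mul_assoc, inv_mul_cancel₀ (hBpos n).ne', one_mul]
        _ ≤ (((B n).card : ℝ))⁻¹ * ∑ t ∈ B n, (inner ℂ ((π t : E) x) ((π t : E) x) : ℂ).re :=
            mul_le_mul_of_nonneg_left hsum (inv_nonneg.mpr (Nat.cast_nonneg _))
    have hdiag_ub : ∀ (n : ℕ) (x : H),
        RCLike.re (avg n x x) ≤ (c^N)^2 * ‖x‖^2 := by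
      intro n x
      have hptw : ∀ t ∈ B n, RCLike.re (inner ℂ ((π t : E) x) ((π t : E) x) : ℂ)
          ≤ (c^N)^2 * ‖x‖^2 := by
        intro t _
        rw [inner_self_eq_norm_sq]
        have h1 : ‖(π t : E) x‖ ≤ c^N * ‖x‖ :=
          le_trans (ContinuousLinearMap.le_opNorm _ _)
            (mul_le_mul_of_nonneg_right (hbd' t) (norm_nonneg _))
        nlinarith [norm_nonneg ((π t : E) x)]
      rw [havg_re]
      have hsum : ∑ t ∈ B n, (inner ℂ ((π t : E) x) ((π t : E) x) : ℂ).re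
          ≤ ((B n).card) • ((c^N)^2 * ‖x‖^2) :=
        Finset.sum_le_card_nsmul _ _ _ (fun t ht => by
          have := hptw t ht
          rwa [RCLike.re_to_complex] at this)
      rw [nsmul_eq_mul] at hsum
      calc (((B n).card : ℝ))⁻¹ * ∑ t ∈ B n, (inner ℂ ((π t : E) x) ((π t : E) x) : ℂ).re
          ≤ (((B n).card : ℝ))⁻¹ * (((B n).card : ℝ) * ((c^N)^2 * ‖x‖^2)) :=
            mul_le_mul_of_nonneg_left hsum (inv_nonneg.mpr (Nat.cast_nonneg _))
        _ = (c^N)^2 * ‖x‖^2 := by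
            rw [← mul_assoc, inv_mul_cancel₀ (hBpos n).ne', one_mul]
    have hre_tendsto : ∀ x : H, Filter.Tendsto (fun n => RCLike.re (avg n x x)) U
        (nhds (RCLike.re (L x x))) := by
      intro x
      exact (RCLike.continuous_re.tendsto _).comp (hL x x)
    have hLdiag_lb : ∀ x : H, ((c^N)^2)⁻¹ * ‖x‖^2 ≤ RCLike.re (L x x) :=
      fun x => ge_of_tendsto' (hre_tendsto x) (fun n => hdiag_lb n x)
    have hLdiag_ub : ∀ x : H, RCLike.re (L x x) ≤ (c^N)^2 * ‖x‖^2 :=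
      fun x => le_of_tendsto' (hre_tendsto x) (fun n => hdiag_ub n x)
    -- build the operator A
    have hbound2 : ∀ x y : H, ‖L x y‖ ≤ ((c^N)^2 * ‖x‖) * ‖y‖ := by
      intro x y
      have := hL_bd x y
      nlinarith [norm_nonneg x, norm_nonneg y]
    set gl : H → (H →L[ℂ] ℂ) := fun x =>
      LinearMap.mkContinuous
        { toFun := fun y => L x y
          map_add' := fun y z => hL_add_right x y z
          map_smul' := fun a y => by simpa using hL_smul_right a x y }
        ((c^N)^2 * ‖x‖) (fun y => hbound2 x y) with hgl
    set A0 : H → H := fun x => (InnerProductSpace.toDual ℂ H).symm (gl x) with hA0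
    have hA0_inner : ∀ x y : H, (inner ℂ (A0 x) y : ℂ) = L x y := fun x y =>
      InnerProductSpace.toDual_symm_apply
    have hA0_add : ∀ x y : H, A0 (x + y) = A0 x + A0 y := by
      intro x y
      refine ext_inner_right ℂ (fun z => ?_)
      rw [hA0_inner, inner_add_left, hA0_inner, hA0_inner, hL_add_left]
    have hA0_smul : ∀ (a : ℂ) (x : H), A0 (a • x) = a • A0 x := by
      intro a x
      refine ext_inner_right ℂ (fun z => ?_)
      rw [hA0_inner, inner_smul_left, hA0_inner, hL_smul_left]
    have hA0_norm : ∀ x : H, ‖A0 x‖ ≤ (c^N)^2 * ‖x‖ := by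
      intro x
      rw [hA0]
      simp only
      rw [LinearIsometryEquiv.norm_map]
      exact LinearMap.mkContinuous_norm_le _ (by positivity) _
    set A : E := LinearMap.mkContinuous
      { toFun := A0, map_add' := hA0_add, map_smul' := fun a x => by simpa using hA0_smul a x }
      ((c^N)^2) hA0_norm with hA
    have hA_inner : ∀ x y : H, (inner ℂ (A x) y : ℂ) = L x y := fun x y => hA0_inner x y
    -- A is self-adjoint
    have hA_sa : IsSelfAdjoint A := by
      rw [ContinuousLinearMap.isSelfAdjoint_iff_isSymmetric]
      intro x y
      simp only [ContinuousLinearMap.coe_coe]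
      rw [hA_inner, ← inner_conj_symm, hA_inner, hL_conj]
    -- algebraMap applied
    have halg_apply : ∀ (r : ℝ) (x : H), (algebraMap ℝ E r) x = (r:ℂ) • x := by
      intro r x
      rw [IsScalarTower.algebraMap_apply ℝ ℂ E r, Algebra.algebraMap_eq_smul_one,
        ContinuousLinearMap.smul_apply, ContinuousLinearMap.one_apply]
      norm_num
    have halg_inner_re : ∀ (r : ℝ) (x : H),
        RCLike.re (inner ℂ ((algebraMap ℝ E r) x) x : ℂ) = r * ‖x‖^2 := by
      intro r x
      rw [halg_apply, inner_smul_left, Complex.conj_ofReal, hre_mul, inner_self_eq_norm_sq]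
    -- Loewner bounds for A
    have hmain_lb : algebraMap ℝ E (((c^N)^2)⁻¹) ≤ A := by
      rw [ContinuousLinearMap.le_def]
      refine ⟨ContinuousLinearMap.isSelfAdjoint_iff_isSymmetric.mp
        (hA_sa.sub (IsSelfAdjoint.algebraMap E (IsSelfAdjoint.all _))), fun x => ?_⟩
      have h1 : (A - algebraMap ℝ E (((c^N)^2)⁻¹)).reApplyInnerSelf x
          = RCLike.re (L x x) - ((c^N)^2)⁻¹ * ‖x‖^2 := by
        rw [ContinuousLinearMap.reApplyInnerSelf]
        rw [ContinuousLinearMap.sub_apply, inner_sub_left, map_sub, hA_inner,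
          halg_inner_re]
      rw [h1]
      have := hLdiag_lb x
      linarith
    have hmain_ub : A ≤ algebraMap ℝ E ((c^N)^2) := by
      rw [ContinuousLinearMap.le_def]
      refine ⟨ContinuousLinearMap.isSelfAdjoint_iff_isSymmetric.mp
        ((IsSelfAdjoint.algebraMap E (IsSelfAdjoint.all _)).sub hA_sa), fun x => ?_⟩
      have h1 : (algebraMap ℝ E ((c^N)^2) - A).reApplyInnerSelf x
          = (c^N)^2 * ‖x‖^2 - RCLike.re (L x x) := by
        rw [ContinuousLinearMap.reApplyInnerSelf]
        rw [ContinuousLinearMap.sub_apply, inner_sub_left, map_sub, hA_inner,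
          halg_inner_re]
      rw [h1]
      have := hLdiag_ub x
      linarith
    -- membership in boxes
    have hBmem : ∀ (n : ℕ) (t : Fin N → ℤ), t ∈ B n ↔ ∀ j, t j ∈ Finset.Icc (-(n:ℤ)) (n:ℤ) := by
      intro n t
      simp only [hBdef, Fintype.mem_piFinset]
    -- Folner property: shift by a generator is negligible
    have hshift : ∀ (i : Fin N) (g : (Fin N → ℤ) → ℂ) (M0 : ℝ), (∀ t, ‖g t‖ ≤ M0) →
        Filter.Tendsto (fun n => (((B n).card : ℂ))⁻¹ * ∑ t ∈ B n, g (t + Pi.single i 1)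
          - (((B n).card : ℂ))⁻¹ * ∑ t ∈ B n, g t) Filter.atTop (nhds 0) := by
      intro i g M0 hg
      have hM0 : 0 ≤ M0 := le_trans (norm_nonneg _) (hg 0)
      have htend : Filter.Tendsto (fun n : ℕ => 2*M0 / ((n:ℝ)+1)) Filter.atTop (nhds 0) := by
        have h1 := (tendsto_const_div_atTop_nhds_zero_nat (2*M0)).comp
          (Filter.tendsto_add_atTop_nat 1)
        have h2 : ((fun n : ℕ => 2*M0/(n:ℝ)) ∘ (fun n => n + 1)) = fun n : ℕ => 2*M0/((n:ℝ)+1) := by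
          funext n
          simp only [Function.comp_apply]
          push_cast
          ring
        rwa [h2] at h1
      refine squeeze_zero_norm' (Filter.Eventually.of_forall (fun n => ?_)) htend
      set s : Fin N → ℤ := Pi.single i 1 with hs
      set Sn : Finset (Fin N → ℤ) := (B n).map (Equiv.addRight s).toEmbedding with hSn
      have hSmem : ∀ u, u ∈ Sn ↔ ∃ w ∈ B n, w + s = u := by
        intro u
        simp only [hSn, Finset.mem_map, Equiv.coe_toEmbedding, Equiv.coe_addRight]
      have hsum_shift : ∑ t ∈ B n, g (t + s) = ∑ u ∈ Sn, g u := by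
        rw [hSn, Finset.sum_map]
        simp only [Equiv.coe_toEmbedding, Equiv.coe_addRight]
      have hsplit : ∑ u ∈ Sn, g u - ∑ t ∈ B n, g t
          = ∑ u ∈ Sn \ B n, g u - ∑ u ∈ B n \ Sn, g u := by
        rw [← Finset.sum_inter_add_sum_sdiff Sn (B n) g, ← Finset.sum_inter_add_sum_sdiff (B n) Sn g,
          Finset.inter_comm]
        ring
      have hsub1 : Sn \ B n ⊆ Fintype.piFinset
          (fun j => if j = i then ({(n:ℤ)+1} : Finset ℤ) else Finset.Icc (-(n:ℤ)) n) := by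
        intro u hu
        rw [Finset.mem_sdiff] at hu
        obtain ⟨huS, huB⟩ := hu
        obtain ⟨w, hw, rfl⟩ := (hSmem _).mp huS
        rw [hBmem] at hw
        rw [Fintype.mem_piFinset]
        intro j
        by_cases hj : j = i
        · subst hj
          rw [if_pos rfl, Finset.mem_singleton]
          by_contra hne
          have hws : (w + s) j = w j + 1 := by simp [hs]
          apply huB
          rw [hBmem]
          intro j'
          by_cases hj' : j' = j
          · subst hj'
            have hws' : (w + s) j' = w j' + 1 := by simp [hs]
            rw [hws', Finset.mem_Icc]
            have h3 := hw j'
            rw [Finset.mem_Icc] at h3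
            have h5 : w j' + 1 ≠ (n:ℤ)+1 := by rw [← hws']; exact hne
            omega
          · have hws' : (w + s) j' = w j' := by simp [hs, Pi.single_eq_of_ne hj']
            rw [hws']
            exact hw j'
        · rw [if_neg hj]
          have hws : (w + s) j = w j := by simp [hs, Pi.single_eq_of_ne hj]
          rw [hws]
          exact hw j
      have hsub2 : B n \ Sn ⊆ Fintype.piFinset
          (fun j => if j = i then ({-(n:ℤ)} : Finset ℤ) else Finset.Icc (-(n:ℤ)) n) := by
        intro t ht
        rw [Finset.mem_sdiff] at ht
        obtain ⟨htB, htS⟩ := ht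
        have htnot : t - s ∉ B n := fun hcmem => htS ((hSmem t).mpr ⟨t - s, hcmem, by abel⟩)
        rw [hBmem] at htB
        rw [Fintype.mem_piFinset]
        intro j
        by_cases hj : j = i
        · subst hj
          rw [if_pos rfl, Finset.mem_singleton]
          by_contra hne
          apply htnot
          rw [hBmem]
          intro j'
          by_cases hj' : j' = j
          · subst hj'
            have hws' : (t - s) j' = t j' - 1 := by simp [hs]
            rw [hws', Finset.mem_Icc]
            have h3 := htB j'
            rw [Finset.mem_Icc] at h3
            omega
          · have hws' : (t - s) j' = t j' := by simp [hs, Pi.single_eq_of_ne hj']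
            rw [hws']
            exact htB j'
        · rw [if_neg hj]
          exact htB j
      have hcardD : ∀ z : ℤ, (Fintype.piFinset
          (fun j => if j = i then ({z} : Finset ℤ) else Finset.Icc (-(n:ℤ)) n)).card
          = (2*n+1)^(N-1) := by
        intro z
        rw [Fintype.card_piFinset]
        rw [← Finset.mul_prod_erase Finset.univ _ (Finset.mem_univ i)]
        rw [if_pos rfl, Finset.card_singleton, one_mul]
        have hterm2 : ∀ j ∈ Finset.univ.erase i,
            (if j = i then ({z} : Finset ℤ) else Finset.Icc (-(n:ℤ)) n).card = 2*n+1 := by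
          intro j hj
          rw [if_neg (Finset.ne_of_mem_erase hj), Int.card_Icc]
          omega
        rw [Finset.prod_congr rfl hterm2, Finset.prod_const,
          Finset.card_erase_of_mem (Finset.mem_univ i), Finset.card_univ, Fintype.card_fin]
      have hnorm_le : ∀ T : Finset (Fin N → ℤ), ‖∑ u ∈ T, g u‖ ≤ (T.card : ℝ) * M0 := by
        intro T
        refine le_trans (norm_sum_le _ _) ?_
        rw [← nsmul_eq_mul]
        exact Finset.sum_le_card_nsmul _ _ _ (fun t _ => hg t)
      have hc1 : ((Sn \ B n).card : ℝ) ≤ (((2*n+1)^(N-1) : ℕ) : ℝ) := by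
        exact_mod_cast (Finset.card_le_card hsub1).trans_eq (hcardD ((n:ℤ)+1))
      have hc2 : ((B n \ Sn).card : ℝ) ≤ (((2*n+1)^(N-1) : ℕ) : ℝ) := by
        exact_mod_cast (Finset.card_le_card hsub2).trans_eq (hcardD (-(n:ℤ)))
      have hkey : ‖∑ u ∈ Sn, g u - ∑ t ∈ B n, g t‖ ≤ 2 * (((2*n+1)^(N-1) : ℕ) : ℝ) * M0 := by
        rw [hsplit]
        refine le_trans (norm_sub_le _ _) ?_
        have b1 := hnorm_le (Sn \ B n)
        have b2 := hnorm_le (B n \ Sn)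
        have d1 : ((Sn \ B n).card : ℝ) * M0 ≤ (((2*n+1)^(N-1) : ℕ) : ℝ) * M0 :=
          mul_le_mul_of_nonneg_right hc1 hM0
        have d2 : ((B n \ Sn).card : ℝ) * M0 ≤ (((2*n+1)^(N-1) : ℕ) : ℝ) * M0 :=
          mul_le_mul_of_nonneg_right hc2 hM0
        linarith
      have hrw : (((B n).card : ℂ))⁻¹ * ∑ t ∈ B n, g (t + s)
          - (((B n).card : ℂ))⁻¹ * ∑ t ∈ B n, g t
          = (((B n).card : ℂ))⁻¹ * (∑ u ∈ Sn, g u - ∑ t ∈ B n, g t) := by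
        rw [hsum_shift, mul_sub]
      rw [hrw, norm_mul, norm_inv, Complex.norm_natCast]
      have hcardR : ((B n).card : ℝ) = (((2*n+1)^N : ℕ) : ℝ) := by
        exact_mod_cast congrArg (Nat.cast : ℕ → ℝ) (hBcard n)
      calc (((B n).card : ℝ))⁻¹ * ‖∑ u ∈ Sn, g u - ∑ t ∈ B n, g t‖
          ≤ (((B n).card : ℝ))⁻¹ * (2 * (((2*n+1)^(N-1) : ℕ) : ℝ) * M0) :=
            mul_le_mul_of_nonneg_left hkey (inv_nonneg.mpr (Nat.cast_nonneg _))
        _ ≤ 2*M0/((n:ℝ)+1) := by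
            rw [hcardR]
            have hsplitN : (2*n+1)^N = (2*n+1)^(N-1) * (2*n+1) := by
              conv_lhs => rw [show N = (N-1)+1 by omega]
              rw [pow_succ]
            rw [hsplitN]
            push_cast
            have hKpos : (0:ℝ) < (2*(n:ℝ)+1)^(N-1) := by positivity
            have h2n : (0:ℝ) < 2*(n:ℝ)+1 := by positivity
            have heq2 : ((2*(n:ℝ)+1)^(N-1) * (2*(n:ℝ)+1))⁻¹ * (2 * (2*(n:ℝ)+1)^(N-1) * M0)
                = 2*M0/(2*(n:ℝ)+1) := by
              field_simp
            rw [heq2]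
            gcongr
            linarith
    -- invariance of L under generators
    have hLgen : ∀ (i : Fin N) (x y : H),
        L ((π (Pi.single i 1) : E) x) ((π (Pi.single i 1) : E) y) = L x y := by
      intro i x y
      have hd := hshift i (fun t => (inner ℂ ((π t : E) x) ((π t : E) y) : ℂ)) _
        (fun t => hterm t x y)
      have heq : ∀ n : ℕ, avg n ((π (Pi.single i 1) : E) x) ((π (Pi.single i 1) : E) y)
          - avg n x y
          = (((B n).card : ℂ))⁻¹ *
              ∑ t ∈ B n, (inner ℂ ((π (t + Pi.single i 1) : E) x) ((π (t + Pi.single i 1) : E) y) : ℂ)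
            - (((B n).card : ℂ))⁻¹ * ∑ t ∈ B n, (inner ℂ ((π t : E) x) ((π t : E) y) : ℂ) := by
        intro n
        simp only [havgdef]
        congr 2
        refine Finset.sum_congr rfl (fun t _ => ?_)
        rw [hπmul, ContinuousLinearMap.mul_apply, ContinuousLinearMap.mul_apply]
      have hdiff : Filter.Tendsto (fun n => avg n ((π (Pi.single i 1) : E) x)
          ((π (Pi.single i 1) : E) y) - avg n x y) U (nhds 0) := by
        have h2 := hd.mono_left hUle
        rw [show (fun n => (((B n).card : ℂ))⁻¹ *
              ∑ t ∈ B n, (inner ℂ ((π (t + Pi.single i 1) : E) x) ((π (t + Pi.single i 1) : E) y) : ℂ)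
            - (((B n).card : ℂ))⁻¹ * ∑ t ∈ B n, (inner ℂ ((π t : E) x) ((π t : E) y) : ℂ))
          = (fun n => avg n ((π (Pi.single i 1) : E) x) ((π (Pi.single i 1) : E) y) - avg n x y)
          from funext fun n => (heq n).symm] at h2
        exact h2
      have h3 : Filter.Tendsto (fun n => avg n ((π (Pi.single i 1) : E) x)
          ((π (Pi.single i 1) : E) y)) U (nhds (L x y)) := by
        have h4 := (hL x y).add hdiff
        rw [add_zero] at h4
        have h5 : (fun n => avg n x y + (avg n ((π (Pi.single i 1) : E) x)
            ((π (Pi.single i 1) : E) y) - avg n x y))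
            = fun n => avg n ((π (Pi.single i 1) : E) x) ((π (Pi.single i 1) : E) y) := by
          funext n
          ring
        rwa [h5] at h4
      exact tendsto_nhds_unique (hL _ _) h3
    -- operator invariance for generators
    have hgen_op : ∀ i : Fin N,
        star ((π (Pi.single i 1) : E)) * A * (π (Pi.single i 1) : E) = A := by
      intro i
      refine ContinuousLinearMap.ext fun x => ?_
      refine ext_inner_right ℂ fun y => ?_
      rw [ContinuousLinearMap.mul_apply, ContinuousLinearMap.mul_apply,
        ContinuousLinearMap.star_eq_adjoint, ContinuousLinearMap.adjoint_inner_left,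
        hA_inner, hA_inner]
      exact hLgen i x y
    -- extend invariance to the whole group
    have hA_invariant : ∀ t : Fin N → ℤ, star ((π t : E)) * A * (π t : E) = A := by
      set Gs : AddSubgroup (Fin N → ℤ) :=
        { carrier := {t | star ((π t : E)) * A * (π t : E) = A}
          zero_mem' := by
            simp only [Set.mem_setOf_eq, hπ0, Units.val_one, star_one, one_mul, mul_one]
          add_mem' := by
            intro a b ha hb
            simp only [Set.mem_setOf_eq] at ha hb ⊢
            rw [hπmul, star_mul]
            calc star (π b : E) * star (π a : E) * A * ((π a : E) * (π b : E))
                = star (π b : E) * ((star (π a : E) * A * (π a : E)) * (π b : E)) := by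
                  noncomm_ring
              _ = star (π b : E) * (A * (π b : E)) := by rw [ha]
              _ = star (π b : E) * A * (π b : E) := by rw [mul_assoc]
              _ = A := hb
          neg_mem' := by
            intro a ha
            simp only [Set.mem_setOf_eq] at ha ⊢
            have hv1 : (π a : E) * (π (-a) : E) = 1 := by
              rw [← hπmul, add_neg_cancel, hπ0, Units.val_one]
            conv_lhs => rw [← ha]
            have h6 : star (π (-a) : E) * (star (π a : E) * A * (π a : E)) * (π (-a) : E)
                = (star (π (-a) : E) * star (π a : E)) * A * ((π a : E) * (π (-a) : E)) := by
              noncomm_ring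
            rw [h6, ← star_mul, hv1, star_one, one_mul, mul_one] } with hGs
      intro t
      have hsingle : ∀ (i : Fin N) (m : ℤ), Pi.single i m ∈ Gs := by
        intro i m
        have h1 : (Pi.single i m : Fin N → ℤ) = m • Pi.single i (1:ℤ) := by
          funext j
          by_cases hj : j = i
          · subst hj
            simp
          · simp [Pi.single_eq_of_ne hj]
        rw [h1]
        exact zsmul_mem (show Pi.single i (1:ℤ) ∈ Gs from hgen_op i) m
      have hmemt : t ∈ Gs := by
        have ht : t = ∑ j : Fin N, Pi.single j (t j) := (Finset.univ_sum_single t).symm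
        rw [ht]
        exact sum_mem (fun j _ => hsingle j (t j))
      exact hmemt
    exact ⟨A, hA_sa, hmain_lb, hmain_ub, hA_invariant⟩



  have hcN : (0:ℝ) < c ^ N := by positivity
  have hm : (0:ℝ) < ((c ^ N) ^ 2)⁻¹ := by positivity
  have halg_nonneg' : ∀ r : ℝ, 0 ≤ r → (0 : E) ≤ algebraMap ℝ E r := by
    intro r hr
    have : algebraMap ℝ E r = star (algebraMap ℝ E (Real.sqrt r)) * algebraMap ℝ E (Real.sqrt r) := by
      rw [(IsSelfAdjoint.algebraMap E (IsSelfAdjoint.all _)).star_eq, ← map_mul,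
        Real.mul_self_sqrt hr]
    rw [this]
    exact star_mul_self_nonneg _
  have halg_nonneg : (0 : E) ≤ algebraMap ℝ E (((c ^ N) ^ 2)⁻¹) := halg_nonneg' _ hm.le
  have hA_nonneg : (0 : E) ≤ A := halg_nonneg.trans hA_lb
  have hA_unit : IsUnit A :=
    CStarAlgebra.isUnit_of_le _ hA_lb
      (IsStrictlyPositive.iff_of_unital.mpr ⟨halg_nonneg, IsUnit.map (algebraMap ℝ E) hm.ne'.isUnit⟩)
  -- the unit version of A
  set AU : Eˣ := hA_unit.unit with hAU
  have hAUval : (AU : E) = A := rfl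
  have hspec0 : 0 ∉ spectrum ℝ≥0 A := hAUval ▸ AU.zero_notMem_spectrum ℝ≥0 
  have hAinv_nonneg : (0 : E) ≤ ↑AU⁻¹ := CFC.inv_nonneg_of_nonneg AU hA_nonneg
  -- bound on the inverse
  have hmu : IsUnit (algebraMap ℝ E (((c ^ N) ^ 2)⁻¹)) := IsUnit.map _ hm.ne'.isUnit
  have hAinv_le : (↑AU⁻¹ : E) ≤ algebraMap ℝ E ((c ^ N) ^ 2) := by
    have h2 := CStarAlgebra.inv_le_inv (a := hmu.unit) (b := AU) halg_nonneg hA_lb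
    refine h2.trans ?_
    have : (↑hmu.unit⁻¹ : E) = algebraMap ℝ E ((c ^ N) ^ 2) := by
      rw [← Units.mul_eq_one_iff_inv_eq]
      rw [IsUnit.unit_spec, ← map_mul]
      rw [inv_mul_cancel₀ (by positivity), map_one]
    rw [this]
  have hnormA : ‖A‖ ≤ (c ^ N) ^ 2 :=
    (CStarAlgebra.norm_le_iff_le_algebraMap A (by positivity) hA_nonneg).mpr hA_ub
  have hnormAinv : ‖(↑AU⁻¹ : E)‖ ≤ (c ^ N) ^ 2 :=
    (CStarAlgebra.norm_le_iff_le_algebraMap _ (by positivity) hAinv_nonneg).mpr hAinv_le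
  -- square roots
  set P : E := (A ^ (1/2 : ℝ) : E) with hP
  set Q : E := (A ^ (-(1/2) : ℝ) : E) with hQ
  have hP_nonneg : (0:E) ≤ P := CFC.rpow_nonneg
  have hQ_nonneg : (0:E) ≤ Q := CFC.rpow_nonneg
  have hP_sa : IsSelfAdjoint P := .of_nonneg hP_nonneg
  have hQ_sa : IsSelfAdjoint Q := .of_nonneg hQ_nonneg
  have hPQ : P * Q = 1 := CFC.rpow_mul_rpow_neg (1/2 : ℝ) (Units.isStrictlyPositive_of_le (a := AU) hA_nonneg)
  have hQP : Q * P = 1 := CFC.rpow_neg_mul_rpow (1/2 : ℝ) (Units.isStrictlyPositive_of_le (a := AU) hA_nonneg)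
  have hPP : P * P = A := by
    rw [hP, ← CFC.rpow_add hA_unit]
    norm_num
    exact CFC.rpow_one A hA_nonneg
  have hQQ : Q * Q = ↑AU⁻¹ := by
    rw [hQ, ← CFC.rpow_add hA_unit, ← CFC.rpow_neg_one_eq_inv AU hA_nonneg]
    norm_num
    rw [hAUval]
  have hQA : Q * A = P := by
    nth_rewrite 1 [← CFC.rpow_one A hA_nonneg]
    rw [hQ, hP, ← CFC.rpow_add hA_unit]
    norm_num
  have hnormP : ‖P‖ ≤ c ^ N := by
    have h1 : ‖P‖ * ‖P‖ ≤ (c^N) * (c^N) := by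
      rw [← CStarRing.norm_star_mul_self (x := P), hP_sa.star_eq, hPP, ← sq]
      nlinarith [hnormA]
    nlinarith [norm_nonneg P, hcN]
  have hnormQ : ‖Q‖ ≤ c ^ N := by
    have h1 : ‖Q‖ * ‖Q‖ ≤ (c^N) * (c^N) := by
      rw [← CStarRing.norm_star_mul_self (x := Q), hQ_sa.star_eq, hQQ, ← sq]
      nlinarith [hnormAinv]
    nlinarith [norm_nonneg Q, hcN]
  refine ⟨⟨Q, P, hQP, hPQ⟩, ?_, ?_⟩
  · calc ‖Q‖ * ‖P‖ ≤ c^N * c^N := by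
          exact mul_le_mul hnormQ hnormP (norm_nonneg _) hcN.le
    _ = c ^ (2*N) := by rw [← pow_add, two_mul]
  · intro t
    set u : E := (π t : E) with hu
    have huv : u * (↑(π t)⁻¹ : E) = 1 := by
      rw [hu, ← Units.val_mul, mul_inv_cancel, Units.val_one]
    have hvu : (↑(π t)⁻¹ : E) * u = 1 := by
      rw [hu, ← Units.val_mul, inv_mul_cancel, Units.val_one]
    have hAinvA : (↑AU⁻¹ : E) * A = 1 := by
      rw [← hAUval, ← Units.val_mul, inv_mul_cancel, Units.val_one]
    have hAAinv : A * (↑AU⁻¹ : E) = 1 := by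
      rw [← hAUval, ← Units.val_mul, mul_inv_cancel, Units.val_one]
    have hstaru : star u = A * (↑(π t)⁻¹ : E) * ↑AU⁻¹ := by
      have h1 : star u * A * u * ((↑(π t)⁻¹ : E) * ↑AU⁻¹)
          = A * ((↑(π t)⁻¹ : E) * ↑AU⁻¹) := by rw [hA_inv t]
      calc star u = star u * (A * (u * (↑(π t)⁻¹ : E)) * ↑AU⁻¹) := by
            rw [huv, mul_one, hAAinv, mul_one]
        _ = star u * A * u * ((↑(π t)⁻¹ : E) * ↑AU⁻¹) := by simp only [mul_assoc]
        _ = A * ((↑(π t)⁻¹ : E) * ↑AU⁻¹) := h1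
        _ = A * (↑(π t)⁻¹ : E) * ↑AU⁻¹ := by rw [mul_assoc]
    have hinv2 : u * (↑AU⁻¹ : E) * star u = ↑AU⁻¹ := by
      rw [hstaru]
      calc u * ↑AU⁻¹ * (A * (↑(π t)⁻¹ : E) * ↑AU⁻¹)
          = u * ((↑AU⁻¹ * A) * (↑(π t)⁻¹ : E)) * ↑AU⁻¹ := by
            simp only [mul_assoc]
        _ = ↑AU⁻¹ := by rw [hAinvA, one_mul, huv, one_mul]
    rw [Unitary.mem_iff]
    have hT : ((↑(⟨Q, P, hQP, hPQ⟩ : Eˣ)⁻¹ * u * ↑(⟨Q, P, hQP, hPQ⟩ : Eˣ)) : E) = P * u * Q := rfl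
    rw [hT]
    constructor
    · have : star (P * u * Q) * (P * u * Q) = Q * (star u * A * u) * Q := by
        rw [star_mul, star_mul, hP_sa.star_eq, hQ_sa.star_eq]
        calc Q * (star u * P) * (P * u * Q)
            = Q * (star u * (P * P) * u) * Q := by simp only [mul_assoc]
          _ = Q * (star u * A * u) * Q := by rw [hPP]
      rw [this, hA_inv t, hQA, hPQ]
    · have : (P * u * Q) * star (P * u * Q) = P * (u * ↑AU⁻¹ * star u) * P := by
        rw [star_mul, star_mul, hP_sa.star_eq, hQ_sa.star_eq]
        calc P * u * Q * (Q * (star u * P))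
            = P * (u * (Q * Q) * star u) * P := by simp only [mul_assoc]
          _ = P * (u * ↑AU⁻¹ * star u) * P := by rw [hQQ]
      rw [this, hinv2]
      have : P * (↑AU⁻¹ : E) * P = 1 := by
        calc P * ↑AU⁻¹ * P = P * (Q * Q) * P := by rw [hQQ]
          _ = (P * Q) * (Q * P) := by simp only [mul_assoc]
          _ = 1 := by rw [hPQ, hQP, one_mul]
      rw [this]
end
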